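/- arXiv:1712.00861 — 9 statements merged into one kernel-verified Lean document; each statement's English description precedes it below -/
import Mathlib

section
/- There exists a constant C > 0 such that for every integer n ≥ 1 and every integer r ≥ 1 there is a sequence X : Fin N → (Fin r → ZMod n), where N = ⌊(n/2) · (max(5/4 − C·n^(−3/2), 0))^r⌋, containing no zero-sum subsequence of length 2n. Equivalently, the generalized Erdős–Ginzburg–Ziv constant satisfies s_{2n}(C_n^r) > (n/2)·(5/4 − O(n^(−3/2)))^r. -/
/-!
Probabilistic method with a union bound. Give the `m` vectors independent coordinates, each `1`
with probability `1/5` and `0` otherwise (realised by counting maps into `Fin 5`, where only `0`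
is sent to `1`). A set `S` of `2n` indices sums to zero iff in every coordinate the number of
ones in `S` is `0`, `n` or `2n`, which happens for at most `T = 16^n + C(2n,n) 4^n + 1` of the
`25^n` patterns on `S`. Hence the expected number of zero-sum `2n`-subsets is at most
`C(m,2n) (T / 25^n)^r`, and this is `< 1` when `m ≤ (n/2) (5/4 (1 - n^(-3/2)))^r`, because
`C(m,2n) ≤ (2m/n)^(2n)`, `C(2n,n) ≤ 4^n / √(2n+1)` and `(1-t)^(2n) (1 + 2nt) < 1` with
`2nt = 2/√n`.
-/

open Finset Real
open scoped Nat

theorem sum_boole_eq_zero_iff {ι κ β : Type*} [DecidableEq β] (b : β) (n : ℕ)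
    (ω : ι → κ → β) (S : Finset ι) :
    ∑ j ∈ S, (fun i => if ω j i = b then (1 : ZMod n) else 0) = 0 ↔
      ∀ i, n ∣ #{j ∈ S | ω j i = b} := by
  simp only [funext_iff, Finset.sum_apply, sum_boole, Pi.zero_apply, ZMod.natCast_eq_zero_iff]

theorem card_filter_forall_apply_le {ι κ β : Type*} [Fintype ι] [DecidableEq ι] [Fintype κ]
    [DecidableEq κ] [Fintype β] (P : (ι → β) → Prop) [DecidablePred P] :
    #{ω : ι → κ → β | ∀ i, P fun j => ω j i} ≤ #{h : ι → β | P h} ^ Fintype.card κ :=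
  calc _ ≤ #(Fintype.piFinset fun _ : κ => ({h : ι → β | P h} : Finset _)) :=
        card_le_card_of_injOn Function.swap (fun ω hω => by simp_all)
          Function.swap_bijective.injective.injOn
    _ = _ := by rw [Fintype.card_piFinset, prod_const, card_univ]

section Counting

variable {ι β : Type*} [Fintype ι] [DecidableEq ι] [Fintype β] [DecidableEq β] (b : β)

theorem card_filter_card_filter_eq_le (S : Finset ι) (k : ℕ) :
    #{h : ι → β | #{j ∈ S | h j = b} = k} ≤
      (#S).choose k * (Fintype.card β - 1) ^ (#S - k) * Fintype.card β ^ (Fintype.card ι - #S) := by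
  let cell (A : Finset ι) : Finset (ι → β) :=
    Fintype.piFinset fun j => if j ∈ A then {b} else if j ∈ S then univ.erase b else univ
  have hcover : ({h : ι → β | #{j ∈ S | h j = b} = k} : Finset _) ⊆
      (S.powersetCard k).biUnion cell := by
    intro h hh
    simp only [mem_filter, mem_univ, true_and] at hh
    refine mem_biUnion.mpr ⟨{j ∈ S | h j = b}, mem_powersetCard.mpr ⟨filter_subset _ _, hh⟩, ?_⟩
    simp only [cell, Fintype.mem_piFinset]
    intro j
    split_ifs <;> simp_all
  have hcell : ∀ A ∈ S.powersetCard k,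
      #(cell A) = (Fintype.card β - 1) ^ (#S - k) * Fintype.card β ^ (Fintype.card ι - #S) := by
    intro A hA
    obtain ⟨hAS, hAk⟩ := mem_powersetCard.mp hA
    simp only [cell, Fintype.card_piFinset]
    rw [← prod_mul_prod_compl S]
    congr 1
    · rw [prod_congr rfl fun i hi => congrArg card (if_congr Iff.rfl rfl (if_pos hi)),
        prod_apply_ite, prod_const, prod_const, card_singleton, one_pow, one_mul,
        card_erase_of_mem (mem_univ b), card_univ, ← sdiff_eq_filter, card_sdiff_of_subset hAS,
        hAk]
    · rw [prod_congr rfl fun i hi => by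
        rw [if_neg fun h => mem_compl.mp hi (hAS h), if_neg (mem_compl.mp hi)]]
      simp [card_compl]
  calc _ ≤ #((S.powersetCard k).biUnion cell) := card_le_card hcover
    _ ≤ ∑ A ∈ S.powersetCard k, #(cell A) := card_biUnion_le
    _ = _ := by rw [sum_congr rfl hcell, sum_const, card_powersetCard, smul_eq_mul, mul_assoc]

theorem card_filter_dvd_card_filter_le {n : ℕ} {S : Finset ι} (hS : #S = 2 * n) :
    #{h : ι → β | n ∣ #{j ∈ S | h j = b}} ≤
      ((Fintype.card β - 1) ^ (2 * n) + (2 * n).choose n * (Fintype.card β - 1) ^ n + 1) *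
        Fintype.card β ^ (Fintype.card ι - 2 * n) := by
  set level := fun k => ({h : ι → β | #{j ∈ S | h j = b} = k} : Finset _)
  have hsub : ({h : ι → β | n ∣ #{j ∈ S | h j = b}} : Finset _) ⊆
      level 0 ∪ level n ∪ level (2 * n) := by
    intro h hh
    simp only [level, mem_union, mem_filter, mem_univ, true_and] at hh ⊢
    have hle : #{j ∈ S | h j = b} ≤ 2 * n := hS ▸ card_filter_le _ _
    obtain ⟨c, hc⟩ := hh
    rw [hc] at hle ⊢
    rcases c with _ | _ | _ | c
    · simp
    · simp
    · simp [mul_comm]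
    · right; nlinarith
  have hlevel (k : ℕ) := card_filter_card_filter_eq_le b S k
  rw [hS] at hlevel
  calc _ ≤ #(level 0 ∪ level n ∪ level (2 * n)) := card_le_card hsub
    _ ≤ #(level 0) + #(level n) + #(level (2 * n)) :=
      (card_union_le _ _).trans (Nat.add_le_add_right (card_union_le _ _) _)
    _ ≤ _ := by
      refine (Nat.add_le_add (Nat.add_le_add (hlevel 0) (hlevel n)) (hlevel (2 * n))).trans_eq ?_
      rw [two_mul, Nat.add_sub_cancel]
      simp
      ring

theorem card_filter_forall_dvd_card_filter_le {κ : Type*} [Fintype κ] [DecidableEq κ] {n : ℕ}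
    {S : Finset ι} (hS : #S = 2 * n) :
    #{ω : ι → κ → β | ∀ i, n ∣ #{j ∈ S | ω j i = b}} ≤
      ((Fintype.card β - 1) ^ (2 * n) + (2 * n).choose n * (Fintype.card β - 1) ^ n + 1) ^
          Fintype.card κ *
        (Fintype.card β ^ Fintype.card κ) ^ (Fintype.card ι - 2 * n) :=
  calc _ ≤ #{h : ι → β | n ∣ #{j ∈ S | h j = b}} ^ Fintype.card κ :=
        card_filter_forall_apply_le fun h : ι → β => n ∣ #{j ∈ S | h j = b}
    _ ≤ _ := (Nat.pow_le_pow_left (card_filter_dvd_card_filter_le b hS) _).trans_eq <| by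
        rw [mul_pow, ← pow_mul, ← pow_mul, mul_comm (Fintype.card ι - 2 * n)]

end Counting

theorem exists_forall_sum_ne_zero_of_choose_mul_lt {ι κ β : Type*} [Fintype ι] [DecidableEq ι]
    [Fintype κ] [DecidableEq κ] [Fintype β] [DecidableEq β] (b : β) {n : ℕ}
    (h : (Fintype.card ι).choose (2 * n) *
        ((Fintype.card β - 1) ^ (2 * n) + (2 * n).choose n * (Fintype.card β - 1) ^ n + 1) ^
          Fintype.card κ < (Fintype.card β ^ Fintype.card κ) ^ (2 * n)) :
    ∃ X : ι → κ → ZMod n, ∀ S : Finset ι, #S = 2 * n → ∑ j ∈ S, X j ≠ 0 := by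
  by_contra! hX
  set T := (Fintype.card β - 1) ^ (2 * n) + (2 * n).choose n * (Fintype.card β - 1) ^ n + 1
  set q := Fintype.card β ^ Fintype.card κ
  set bad := fun S : Finset ι => ({ω : ι → κ → β | ∀ i, n ∣ #{j ∈ S | ω j i = b}} : Finset _)
  obtain ⟨S₀, hS₀, -⟩ := hX 0
  have hn : 2 * n ≤ Fintype.card ι := hS₀ ▸ card_le_univ S₀
  have hcover : (univ : Finset (ι → κ → β)) ⊆ (powersetCard (2 * n) univ).biUnion bad := by
    intro ω _
    obtain ⟨S, hS, hsum⟩ := hX fun j i => if ω j i = b then 1 else 0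
    exact mem_biUnion.mpr ⟨S, mem_powersetCard_univ.mpr hS,
      mem_filter.mpr ⟨mem_univ _, (sum_boole_eq_zero_iff b n ω S).mp hsum⟩⟩
  have hcount : q ^ (2 * n) * q ^ (Fintype.card ι - 2 * n) ≤
      (Fintype.card ι).choose (2 * n) * T ^ Fintype.card κ * q ^ (Fintype.card ι - 2 * n) :=
    calc q ^ (2 * n) * q ^ (Fintype.card ι - 2 * n) = #(univ : Finset (ι → κ → β)) := by
          rw [← pow_add, Nat.add_sub_cancel' hn, card_univ, Fintype.card_fun, Fintype.card_fun]
      _ ≤ ∑ S ∈ powersetCard (2 * n) univ, #(bad S) :=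
          (card_le_card hcover).trans card_biUnion_le
      _ ≤ #(powersetCard (2 * n) (univ : Finset ι)) •
            (T ^ Fintype.card κ * q ^ (Fintype.card ι - 2 * n)) :=
          sum_le_card_nsmul _ _ _ fun S hS =>
            card_filter_forall_dvd_card_filter_le b (mem_powersetCard_univ.mp hS)
      _ = _ := by rw [card_powersetCard, card_univ, smul_eq_mul, ← mul_assoc]
  have hq : 0 < q ^ (Fintype.card ι - 2 * n) := by
    have := Fintype.card_pos_iff.mpr ⟨b⟩
    positivity
  exact (Nat.le_of_mul_le_mul_right hcount hq).not_gt h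

theorem pow_div_four_le_factorial (k : ℕ) : ((k : ℝ) / 4) ^ k ≤ k ! := by
  have hexp : exp k ≤ 4 ^ k := by
    rw [← exp_one_pow]
    exact pow_le_pow_left₀ (exp_pos 1).le (by linarith [exp_one_lt_d9]) k
  have h := (pow_div_factorial_le_exp _ (Nat.cast_nonneg k) k).trans hexp
  rw [div_le_iff₀ (by positivity)] at h
  rw [div_pow, div_le_iff₀ (by positivity)]
  linarith

theorem choose_le_pow_of_le_div_four_mul {m k : ℕ} {y : ℝ} (hy : 0 ≤ y)
    (hm : (m : ℝ) ≤ k / 4 * y) : (m.choose k : ℝ) ≤ y ^ k :=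
  calc (m.choose k : ℝ) ≤ (m : ℝ) ^ k / k ! := Nat.choose_le_pow_div k m
    _ ≤ ((k : ℝ) / 4) ^ k * y ^ k / k ! := by
      rw [← mul_pow]; gcongr
    _ ≤ y ^ k := by
      rw [div_le_iff₀ (by positivity), mul_comm]
      exact mul_le_mul_of_nonneg_left (pow_div_four_le_factorial k) (by positivity)

theorem centralBinom_sq_mul_le (n : ℕ) : Nat.centralBinom n ^ 2 * (2 * n + 1) ≤ 16 ^ n := by
  induction n with
  | zero => simp
  | succ n ih =>
    have hrec := Nat.succ_mul_centralBinom_succ n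
    have hstep : (2 * n + 1) * (2 * n + 3) ≤ 4 * (n + 1) ^ 2 := by nlinarith
    have key : (n + 1) ^ 2 * (Nat.centralBinom (n + 1) ^ 2 * (2 * (n + 1) + 1))
        ≤ (n + 1) ^ 2 * 16 ^ (n + 1) :=
      calc (n + 1) ^ 2 * (Nat.centralBinom (n + 1) ^ 2 * (2 * (n + 1) + 1))
          = ((n + 1) * Nat.centralBinom (n + 1)) ^ 2 * (2 * n + 3) := by ring
        _ = 4 * (2 * n + 1) * ((2 * n + 1) * (2 * n + 3)) * Nat.centralBinom n ^ 2 := by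
            rw [hrec]; ring
        _ ≤ 4 * (2 * n + 1) * (4 * (n + 1) ^ 2) * Nat.centralBinom n ^ 2 := by gcongr
        _ = 16 * (n + 1) ^ 2 * (Nat.centralBinom n ^ 2 * (2 * n + 1)) := by ring
        _ ≤ 16 * (n + 1) ^ 2 * 16 ^ n := by gcongr
        _ = (n + 1) ^ 2 * 16 ^ (n + 1) := by ring
    exact Nat.le_of_mul_le_mul_left key (by positivity)

theorem one_sub_pow_mul_one_add_lt_one {t : ℝ} (ht0 : 0 < t) (ht1 : t ≤ 1) {k : ℕ}
    (hk : k ≠ 0) : (1 - t) ^ k * (1 + k * t) < 1 :=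
  calc (1 - t) ^ k * (1 + k * t) ≤ (1 - t) ^ k * (1 + t) ^ k := by
        gcongr
        exact one_add_mul_le_pow (by linarith) k
    _ = (1 - t ^ 2) ^ k := by rw [← mul_pow]; ring
    _ < 1 := pow_lt_one₀ (by nlinarith) (by nlinarith) hk

theorem four_pow_two_mul_add_choose_lt {n : ℕ} (hn : 1 ≤ n) :
    (4 : ℝ) ^ (2 * n) + (2 * n).choose n * 4 ^ n + 1 < 4 ^ (2 * n) * (1 + 2 / √n) := by
  have hcb : ((Nat.centralBinom n : ℕ) : ℝ) ^ 2 * (2 * n + 1) ≤ 16 ^ n := by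
    exact_mod_cast centralBinom_sq_mul_le n
  rw [← Nat.centralBinom_eq_two_mul_choose]
  set a : ℝ := (Nat.centralBinom n : ℝ)
  set P : ℝ := 4 ^ n
  set s := √n
  have hP : (16 : ℝ) ^ n = P ^ 2 := by rw [← pow_mul, mul_comm, pow_mul]; norm_num
  have hP' : (4 : ℝ) ^ (2 * n) = P ^ 2 := by rw [mul_comm, pow_mul]
  have hs1 : 1 ≤ s := one_le_sqrt.mpr (by exact_mod_cast hn)
  have hs2 : s ^ 2 = n := sq_sqrt (Nat.cast_nonneg n)
  have ha : a * s ≤ P := by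
    refine (pow_le_pow_iff_left₀ (by positivity) (by positivity) two_ne_zero).mp ?_
    nlinarith
  have hsP : s < P ^ 2 := by
    have : (n : ℝ) < 16 ^ n := by exact_mod_cast Nat.lt_pow_self (by norm_num)
    nlinarith
  have haP : a * P * s ≤ P ^ 2 := by
    rw [mul_right_comm, sq]; exact mul_le_mul_of_nonneg_right ha (by positivity)
  rw [hP', mul_add, mul_one, add_assoc, add_lt_add_iff_left, mul_div_assoc',
    lt_div_iff₀ (by positivity)]
  linarith

theorem rpow_neg_three_halves_le_one {n : ℕ} (hn : 1 ≤ n) : (n : ℝ) ^ (-(3 : ℝ) / 2) ≤ 1 :=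
  rpow_le_one_of_one_le_of_nonpos (by exact_mod_cast hn) (by norm_num)

theorem five_fourths_pow_mul_lt {n : ℕ} (hn : 1 ≤ n) :
    (5 / 4 * (1 - (n : ℝ) ^ (-(3 : ℝ) / 2))) ^ (2 * n) *
      ((4 : ℝ) ^ (2 * n) + (2 * n).choose n * 4 ^ n + 1) < 25 ^ n := by
  have hn0 : (0 : ℝ) < n := by exact_mod_cast hn
  set t := (n : ℝ) ^ (-(3 : ℝ) / 2) with ht
  have ht0 : 0 < t := rpow_pos_of_pos hn0 _
  have ht1 : t ≤ 1 := rpow_neg_three_halves_le_one hn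
  have hnt : ((2 * n : ℕ) : ℝ) * t = 2 / √n := by
    have : (n : ℝ) * t = (√n)⁻¹ := by
      rw [ht, ← rpow_one_add' hn0.le (by norm_num), sqrt_eq_rpow, ← rpow_neg hn0.le]
      norm_num
    push_cast
    rw [mul_assoc, this, div_eq_mul_inv]
  calc (5 / 4 * (1 - t)) ^ (2 * n) * ((4 : ℝ) ^ (2 * n) + (2 * n).choose n * 4 ^ n + 1)
      ≤ (5 / 4 * (1 - t)) ^ (2 * n) * (4 ^ (2 * n) * (1 + ((2 * n : ℕ) : ℝ) * t)) := by
        rw [hnt]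
        have : 0 ≤ 1 - t := by linarith
        gcongr
        exact (four_pow_two_mul_add_choose_lt hn).le
    _ = 5 ^ (2 * n) * ((1 - t) ^ (2 * n) * (1 + ((2 * n : ℕ) : ℝ) * t)) := by
        rw [mul_pow, div_pow]; field_simp
    _ < 5 ^ (2 * n) * 1 := by gcongr; exact one_sub_pow_mul_one_add_lt_one ht0 ht1 (by omega)
    _ = 25 ^ n := by rw [mul_one, pow_mul]; norm_num

theorem choose_mul_pow_lt_five_pow {n r m : ℕ} (hn : 1 ≤ n) (hr : r ≠ 0)
    (hm : (m : ℝ) ≤ n / 2 * (5 / 4 - 5 / 4 * (n : ℝ) ^ (-(3 : ℝ) / 2)) ^ r) :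
    (m.choose (2 * n) : ℝ) * ((4 : ℝ) ^ (2 * n) + (2 * n).choose n * 4 ^ n + 1) ^ r
      < ((5 : ℝ) ^ r) ^ (2 * n) := by
  set β := 5 / 4 * (1 - (n : ℝ) ^ (-(3 : ℝ) / 2))
  have hβ : 0 ≤ β := by
    have := rpow_neg_three_halves_le_one hn
    positivity
  have hC : (m.choose (2 * n) : ℝ) ≤ (β ^ r) ^ (2 * n) := by
    refine choose_le_pow_of_le_div_four_mul (by positivity) ?_
    convert hm using 1
    push_cast; ring
  calc (m.choose (2 * n) : ℝ) * ((4 : ℝ) ^ (2 * n) + (2 * n).choose n * 4 ^ n + 1) ^ r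
      ≤ (β ^ r) ^ (2 * n) * ((4 : ℝ) ^ (2 * n) + (2 * n).choose n * 4 ^ n + 1) ^ r := by
        gcongr
    _ = (β ^ (2 * n) * ((4 : ℝ) ^ (2 * n) + (2 * n).choose n * 4 ^ n + 1)) ^ r := by
        rw [← pow_mul, mul_pow (β ^ (2 * n)), ← pow_mul, mul_comm r]
    _ < (25 ^ n) ^ r := pow_lt_pow_left₀ (five_fourths_pow_mul_lt hn) (by positivity) hr
    _ = ((5 : ℝ) ^ r) ^ (2 * n) := by
        rw [← pow_mul, ← pow_mul, show (25 : ℝ) = 5 ^ 2 by norm_num, ← pow_mul]; ring_nf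

theorem egz_lower_bound_k2 :
    ∃ C : ℝ, C > 0 ∧ ∀ n r : ℕ, 1 ≤ n → 1 ≤ r →
      ∃ X : Fin (⌊(n / 2 : ℝ) * (max (5 / 4 - C * (n : ℝ) ^ (-(3 : ℝ) / 2)) 0) ^ r⌋₊) →
          (Fin r → ZMod n),
        ∀ S : Finset (Fin (⌊(n / 2 : ℝ) * (max (5 / 4 - C * (n : ℝ) ^ (-(3 : ℝ) / 2)) 0) ^ r⌋₊)),
          S.card = 2 * n → ∑ j ∈ S, X j ≠ 0 := by
  refine ⟨5 / 4, by norm_num, fun n r hn hr => ?_⟩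
  have hbase : 0 ≤ 5 / 4 - 5 / 4 * (n : ℝ) ^ (-(3 : ℝ) / 2) := by
    linarith [rpow_neg_three_halves_le_one hn]
  rw [max_eq_left hbase]
  refine exists_forall_sum_ne_zero_of_choose_mul_lt (0 : Fin 5) ?_
  have hm := choose_mul_pow_lt_five_pow hn (Nat.one_le_iff_ne_zero.mp hr)
    (Nat.floor_le (by positivity))
  simp only [Fintype.card_fin]
  exact_mod_cast hm
end

section
/- For every integer n ≥ 1 and every integer r ≥ 1, setting A = (5/4)·(1 + n^(−1/2))^(−1/(2n)), there exists a sequence X : Fin N → (Fin r → ZMod n) with N = ⌊(n/2)·A^r⌋ containing no zero-sum subsequence of length 2n; that is, s_{2n}(C_n^r) > (n/2)·((5/4)·(1 + n^(−1/2))^(−1/(2n)))^r. -/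
/-!
Take `ω : Fin r → Fin N → Fin 5` uniformly at random and let the `i`-th coordinate of `X j` be
`1` if `ω i j = 0` and `0` otherwise. A fixed set `S` of `2n` indices has zero sum iff in every
coordinate the number of ones on `S` is `0`, `n` or `2n`, which happens for a fraction
`(16^n + C(2n, n) 4^n + 1) / 25^n < (1 + n^(-1/2)) / (25/16)^n` of the rows `ω i`
(using `C(2n, n) ≤ 4^n / √(3n + 1)`). A union bound over the `C(N, 2n) ≤ (e N / 2n)^(2n)` sets
`S` leaves some `ω` with no zero-sum subsequence of length `2n` as soon as
`(2N / n)^(2n) ≤ A^(2nr)`, which is the choice of `N`.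
-/

open Finset Nat Real

section IndicatorSeq

variable {ι κ α : Type*} [DecidableEq α]

def indicatorSeq (n : ℕ) (a : α) (ω : κ → ι → α) : ι → κ → ZMod n :=
  fun j i => if ω i j = a then 1 else 0

lemma sum_indicatorSeq_eq_zero_iff (n : ℕ) (a : α) (ω : κ → ι → α) (S : Finset ι) :
    ∑ j ∈ S, indicatorSeq n a ω j = 0 ↔ ∀ i, n ∣ #{j ∈ S | ω i j = a} := by
  simp only [funext_iff, Finset.sum_apply, Pi.zero_apply, indicatorSeq, sum_boole,
    ZMod.natCast_eq_zero_iff]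

end IndicatorSeq

section Counting

variable {ι α : Type*} [Fintype ι] [DecidableEq ι] [Fintype α] [DecidableEq α]

lemma card_filter_filter_eq_eq (a : α) {S T : Finset ι} (hTS : T ⊆ S) :
    #{h : ι → α | {j ∈ S | h j = a} = T} =
      (Fintype.card α - 1) ^ #(S \ T) * Fintype.card α ^ #Sᶜ := by
  have hpi : ({h : ι → α | {j ∈ S | h j = a} = T} : Finset _) = Fintype.piFinset fun j =>
      if j ∈ T then {a} else if j ∈ S then {a}ᶜ else univ := by
    ext h
    simp only [mem_filter, mem_univ, true_and, Fintype.mem_piFinset, Finset.ext_iff]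
    refine forall_congr' fun j => ?_
    by_cases hjT : j ∈ T
    · simp [hjT, hTS hjT]
    · by_cases hjS : j ∈ S <;> simp [hjT, hjS]
  rw [hpi, Fintype.card_piFinset, ← prod_mul_prod_compl S, ← prod_sdiff hTS,
    prod_eq_pow_card (b := Fintype.card α - 1), prod_eq_one,
    prod_eq_pow_card (b := Fintype.card α), mul_one]
  · intro j hj
    have hjS := mem_compl.1 hj
    have hjT : j ∉ T := fun hjT => hjS (hTS hjT)
    simp [hjS, hjT]
  · intro j hj
    simp [hj]
  · intro j hj
    obtain ⟨hjS, hjT⟩ := mem_sdiff.1 hj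
    simp [hjT, hjS, card_compl]

lemma card_filter_card_filter_eq (a : α) (S : Finset ι) (k : ℕ) :
    #{h : ι → α | #{j ∈ S | h j = a} = k} =
      (#S).choose k * ((Fintype.card α - 1) ^ (#S - k) * Fintype.card α ^ #Sᶜ) := by
  refine (card_eq_sum_card_fiberwise (f := fun (h : ι → α) => {j ∈ S | h j = a})
    (t := S.powersetCard k) fun h hh =>
      mem_powersetCard.2 ⟨filter_subset _ _, (mem_filter.1 hh).2⟩).trans ?_
  rw [← card_powersetCard, ← smul_eq_mul, ← sum_const]
  refine sum_congr rfl fun T hT => ?_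
  obtain ⟨hTS, rfl⟩ := mem_powersetCard.1 hT
  rw [filter_filter, ← card_sdiff_of_subset hTS, ← card_filter_filter_eq_eq a hTS]
  congr 1
  ext h
  simp only [mem_filter, mem_univ, true_and, and_iff_right_iff_imp]
  rintro rfl
  rfl

lemma card_filter_dvd_card_filter (a : α) (S : Finset ι) (n : ℕ) :
    #{h : ι → α | n ∣ #{j ∈ S | h j = a}} =
      ∑ k ∈ range (#S + 1) with n ∣ k,
        (#S).choose k * ((Fintype.card α - 1) ^ (#S - k) * Fintype.card α ^ #Sᶜ) := by
  refine (card_eq_sum_card_fiberwise (f := fun (h : ι → α) => #{j ∈ S | h j = a})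
    (t := {k ∈ range (#S + 1) | n ∣ k}) fun h hh => mem_filter.2
      ⟨mem_range_succ_iff.2 (card_filter_le _ _), (mem_filter.1 hh).2⟩).trans ?_
  refine sum_congr rfl fun k hk => ?_
  rw [filter_filter, ← card_filter_card_filter_eq a]
  congr 1
  ext h
  simp only [mem_filter, mem_univ, true_and, and_iff_right_iff_imp]
  rintro rfl
  exact (mem_filter.1 hk).2

variable {κ : Type*} [Fintype κ] [DecidableEq κ]

lemma card_filter_sum_indicatorSeq_eq_zero (n : ℕ) (a : α) (S : Finset ι) :
    #{ω : κ → ι → α | ∑ j ∈ S, indicatorSeq n a ω j = 0} =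
      (∑ k ∈ range (#S + 1) with n ∣ k, (#S).choose k * (Fintype.card α - 1) ^ (#S - k)) ^
        Fintype.card κ * Fintype.card α ^ (#Sᶜ * Fintype.card κ) := by
  have hpi : ({ω : κ → ι → α | ∑ j ∈ S, indicatorSeq n a ω j = 0} : Finset _) =
      Fintype.piFinset fun _ => {h : ι → α | n ∣ #{j ∈ S | h j = a}} := by
    ext ω
    simp [sum_indicatorSeq_eq_zero_iff]
  rw [hpi, Fintype.card_piFinset, prod_const, Finset.card_univ, card_filter_dvd_card_filter,
    pow_mul, ← mul_pow, sum_mul]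
  simp only [mul_assoc]

theorem exists_forall_card_eq_sum_ne_zero (n L : ℕ) (a : α)
    (h : (Fintype.card ι).choose L *
        (∑ k ∈ range (L + 1) with n ∣ k, L.choose k * (Fintype.card α - 1) ^ (L - k)) ^
          Fintype.card κ < Fintype.card α ^ (L * Fintype.card κ)) :
    ∃ X : ι → κ → ZMod n, ∀ S : Finset ι, #S = L → ∑ j ∈ S, X j ≠ 0 := by
  by_contra! hbad
  have hcover : (univ : Finset (κ → ι → α)) ⊆ (powersetCard L univ).biUnion
      fun S => {ω | ∑ j ∈ S, indicatorSeq n a ω j = 0} := fun ω _ => by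
    obtain ⟨S, hS, hsum⟩ := hbad (indicatorSeq n a ω)
    exact mem_biUnion.2
      ⟨S, mem_powersetCard.2 ⟨subset_univ S, hS⟩, mem_filter.2 ⟨mem_univ _, hsum⟩⟩
  have hcount := (card_le_card hcover).trans card_biUnion_le
  rw [sum_congr rfl fun S hS => by rw [card_filter_sum_indicatorSeq_eq_zero,
    card_compl, (mem_powersetCard.1 hS).2]] at hcount
  rw [Finset.card_univ, Fintype.card_fun, Fintype.card_fun, sum_const, card_powersetCard,
    Finset.card_univ, smul_eq_mul, ← pow_mul] at hcount
  have hq : 0 < Fintype.card α := Fintype.card_pos_iff.2 ⟨a⟩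
  rcases le_or_gt L (Fintype.card ι) with hL | hL
  · have := Nat.mul_lt_mul_of_pos_right h (pow_pos hq ((Fintype.card ι - L) * Fintype.card κ))
    rw [← pow_add, ← add_mul, Nat.add_sub_cancel' hL, mul_assoc] at this
    exact this.not_ge hcount
  · rw [Nat.choose_eq_zero_of_lt hL, zero_mul] at hcount
    exact (pow_pos hq _).ne' (Nat.le_zero.1 hcount)

end Counting

lemma three_mul_add_one_mul_centralBinom_sq_le (n : ℕ) :
    (3 * n + 1) * centralBinom n ^ 2 ≤ 16 ^ n := by
  induction n with
  | zero => simp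
  | succ n ih =>
    refine Nat.le_of_mul_le_mul_left ?_ (by positivity : 0 < (n + 1) ^ 2)
    calc (n + 1) ^ 2 * ((3 * (n + 1) + 1) * centralBinom (n + 1) ^ 2)
        = (3 * n + 4) * ((n + 1) * centralBinom (n + 1)) ^ 2 := by ring
      _ = 4 * (3 * n + 4) * (2 * n + 1) ^ 2 * centralBinom n ^ 2 := by
        rw [succ_mul_centralBinom_succ]; ring
      _ ≤ 16 * (n + 1) ^ 2 * (3 * n + 1) * centralBinom n ^ 2 :=
        Nat.mul_le_mul_right _ (by nlinarith)
      _ = 16 * (n + 1) ^ 2 * ((3 * n + 1) * centralBinom n ^ 2) := by ring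
      _ ≤ 16 * (n + 1) ^ 2 * 16 ^ n := Nat.mul_le_mul_left _ ih
      _ = (n + 1) ^ 2 * 16 ^ (n + 1) := by ring

lemma mul_centralBinom_mul_four_pow_add_one_sq_lt {n : ℕ} (hn : n ≠ 0) :
    n * (centralBinom n * 4 ^ n + 1) ^ 2 < (16 ^ n) ^ 2 := by
  have hC := three_mul_add_one_mul_centralBinom_sq_le n
  have hq : (16 : ℕ) ^ n = (4 ^ n) ^ 2 := by rw [← pow_mul, mul_comm, pow_mul]; norm_num
  have hnq : n < 4 ^ n := Nat.lt_pow_self (by norm_num)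
  have hC1 := centralBinom_pos n
  rw [hq] at hC ⊢
  set q := 4 ^ n
  set C := centralBinom n
  have hq4 : 4 ≤ q := Nat.le_self_pow hn 4
  have h3 : 3 * n * C ^ 2 ≤ q ^ 2 := by nlinarith
  have hlin : 6 * n * C * q ≤ 2 * q ^ 3 :=
    calc 6 * n * C * q ≤ 6 * n * C ^ 2 * q := by gcongr; exact Nat.le_self_pow two_ne_zero C
      _ = 2 * q * (3 * n * C ^ 2) := by ring
      _ ≤ 2 * q * q ^ 2 := by gcongr
      _ = 2 * q ^ 3 := by ring
  have hn3 : 3 * n < C ^ 2 * q ^ 2 :=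
    calc 3 * n < q * q := by nlinarith
      _ = q ^ 2 := (sq q).symm
      _ ≤ C ^ 2 * q ^ 2 := Nat.le_mul_of_pos_left _ (by positivity)
  nlinarith [Nat.mul_le_mul_right (q ^ 2) hC]

lemma choose_le_exp_one_mul_div_pow (N m : ℕ) : (N.choose m : ℝ) ≤ (exp 1 * N / m) ^ m := by
  rcases Nat.eq_zero_or_pos m with rfl | hm
  · simp
  have hfact : (m / exp 1) ^ m ≤ (m ! : ℝ) := by
    have := pow_div_factorial_le_exp (x := m) m.cast_nonneg m
    rw [← exp_one_pow, div_le_iff₀ (by positivity)] at this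
    rw [div_pow, div_le_iff₀ (by positivity)]
    linarith
  calc (N.choose m : ℝ) ≤ N ^ m / m ! := choose_le_pow_div m N
    _ ≤ N ^ m / (m / exp 1) ^ m := by gcongr
    _ = (exp 1 * N / m) ^ m := by rw [← div_pow]; congr 1; field_simp

lemma sixteen_pow_add_centralBinom_mul_four_pow_add_one_lt {n : ℕ} (hn : n ≠ 0) :
    (16 ^ n + centralBinom n * 4 ^ n + 1 : ℝ) < 16 ^ n * (1 + (n : ℝ) ^ (-(1 : ℝ) / 2)) := by
  have hsqrt : 0 < √(n : ℝ) := sqrt_pos.2 (by positivity)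
  have hsq : (√(n : ℝ) * (centralBinom n * 4 ^ n + 1)) ^ 2 < ((16 : ℝ) ^ n) ^ 2 := by
    rw [mul_pow, sq_sqrt n.cast_nonneg]
    exact_mod_cast mul_centralBinom_mul_four_pow_add_one_sq_lt hn
  have hlt := lt_of_pow_lt_pow_left₀ 2 (by positivity) hsq
  rw [neg_div, rpow_neg n.cast_nonneg, ← sqrt_eq_rpow, mul_add, mul_one, add_assoc,
    add_lt_add_iff_left, ← div_eq_mul_inv, lt_div_iff₀ hsqrt, mul_comm]
  exact hlt

lemma filter_dvd_range_two_mul_add_one {n : ℕ} (hn : n ≠ 0) :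
    {k ∈ range (2 * n + 1) | n ∣ k} = {0, n, 2 * n} := by
  ext k
  simp only [mem_filter, mem_range, mem_insert, mem_singleton]
  constructor
  · rintro ⟨hk, m, rfl⟩
    have : m < 3 := by nlinarith [Nat.pos_of_ne_zero hn]
    interval_cases m <;> simp [mul_comm]
  · rintro (rfl | rfl | rfl) <;> simp; omega

lemma sum_filter_dvd_choose_mul_four_pow {n : ℕ} (hn : n ≠ 0) :
    ∑ k ∈ range (2 * n + 1) with n ∣ k, (2 * n).choose k * 4 ^ (2 * n - k) =
      16 ^ n + centralBinom n * 4 ^ n + 1 := by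
  rw [filter_dvd_range_two_mul_add_one hn, sum_insert (by simp; omega),
    sum_insert (by simp; omega), sum_singleton, ← centralBinom_eq_two_mul_choose,
    show 2 * n - n = n by omega]
  simp [pow_mul, add_assoc]

theorem egz_lower_bound_k2_explicit (n r : ℕ) (hn : 1 ≤ n) (hr : 1 ≤ r) :
    ∃ X : Fin (⌊(n / 2 : ℝ) *
          ((5 / 4 : ℝ) * (1 + (n : ℝ) ^ (-(1 : ℝ) / 2)) ^ (-(1 : ℝ) / (2 * n))) ^ r⌋₊) →
        (Fin r → ZMod n),
      ∀ S : Finset (Fin (⌊(n / 2 : ℝ) *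
          ((5 / 4 : ℝ) * (1 + (n : ℝ) ^ (-(1 : ℝ) / 2)) ^ (-(1 : ℝ) / (2 * n))) ^ r⌋₊)),
        S.card = 2 * n → ∑ j ∈ S, X j ≠ 0 := by
  have hn0 : n ≠ 0 := one_le_iff_ne_zero.1 hn
  set β : ℝ := 1 + (n : ℝ) ^ (-(1 : ℝ) / 2)
  set A : ℝ := 5 / 4 * β ^ (-(1 : ℝ) / (2 * n)) with hA
  set N := ⌊(n / 2 : ℝ) * A ^ r⌋₊
  refine exists_forall_card_eq_sum_ne_zero (α := Fin 5) n (2 * n) 0 ?_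
  simp only [Fintype.card_fin, show 5 - 1 = 4 from rfl, sum_filter_dvd_choose_mul_four_pow hn0]
  have hβ : 0 < β := by positivity
  have hA2n : A ^ (2 * n) * (16 ^ n * β) = 25 ^ n := by
    have hexp : -(1 : ℝ) / (2 * n) * ((2 * n : ℕ) : ℝ) = -1 := by push_cast; field_simp
    rw [hA, mul_pow, ← rpow_mul_natCast hβ.le, hexp, rpow_neg_one]
    field_simp
    norm_num [pow_mul, ← mul_pow]
  have hchoose : (N.choose (2 * n) : ℝ) ≤ (A ^ r) ^ (2 * n) := by
    refine (choose_le_exp_one_mul_div_pow N (2 * n)).trans (pow_le_pow_left₀ (by positivity) ?_ _)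
    have hN : (N : ℝ) ≤ n / 2 * A ^ r := Nat.floor_le (by positivity)
    calc exp 1 * N / (2 * n : ℕ) ≤ 4 * N / (2 * n : ℕ) := by
          gcongr; linarith [exp_one_lt_three]
      _ = 2 / n * N := by push_cast; field_simp; ring
      _ ≤ 2 / n * (n / 2 * A ^ r) := by gcongr
      _ = A ^ r := by field_simp
  have hB := sixteen_pow_add_centralBinom_mul_four_pow_add_one_lt hn0
  exact_mod_cast calc
    (N.choose (2 * n) : ℝ) * (16 ^ n + centralBinom n * 4 ^ n + 1) ^ r
      ≤ (A ^ r) ^ (2 * n) * (16 ^ n + centralBinom n * 4 ^ n + 1) ^ r := by gcongr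
    _ < (A ^ r) ^ (2 * n) * (16 ^ n * β) ^ r := by gcongr
    _ = (25 ^ n) ^ r := by rw [← pow_mul, mul_comm r, pow_mul, ← mul_pow, hA2n]
    _ = 5 ^ (2 * n * r) := by rw [pow_mul, pow_mul]; norm_num
end

section
/- There exists a constant C > 0 such that for every integer k ≥ 3, every integer n ≥ 1, and every integer r ≥ 1, there is a sequence X : Fin N → (Fin r → ZMod n), where N = ⌊(k·n/4) · (max(1 + 1/(e·k) − C/n, 0))^r⌋, containing no zero-sum subsequence of length k·n. Equivalently, s_{kn}(C_n^r) > (kn/4)·(1 + 1/(ek) − O(1/n))^r. -/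
/-!
Choose `X` at random: every coordinate of every term is `1` with probability `p ≈ 1 / (e k)`
and `0` otherwise, independently. A set `S` of `k n` terms is zero-sum exactly when in each
of the `r` coordinates the number of ones among `S`, a `Bin(k n, p)` variable, is divisible
by `n`. Each of the `k + 1` outcomes `t n` has probability at most
`((k p / t) ^ t ((k (1 - p)) / (k - t)) ^ (k - t)) ^ n ≤ e ^ (-n / e)`, so a fixed `S` is
zero-sum with probability at most `((k + 1) e ^ (-n / e)) ^ r`. A union bound over the
`C(K, k n) ≤ (e K / (k n)) ^ (k n)` sets `S` leaves a zero-sum-free `X` as soon as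
`K ≤ (k n / 4) (1 + 1 / (e k) - 1 / n) ^ r`. To stay within finite counting, `p = a / b` is
rational and `X` is read off a uniform element of `Fin r → Fin K → Fin b`.
-/

open Finset Real

/-- `b ^ L · ℙ[n ∣ Bin(L, a / b)]` for `b = a + c`. -/
def dvdBinomialSum (L n a c : ℕ) : ℕ :=
  ∑ m ∈ (range (L + 1)).filter (n ∣ ·), L.choose m * a ^ m * c ^ (L - m)

section Counting

open Fintype

variable {ι α : Type*} [Fintype ι] [DecidableEq ι] [Fintype α] [DecidableEq α]

lemma card_filter_mem_filter_eq (A : Finset α) {S T : Finset ι} (hTS : T ⊆ S) :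
    #{v : ι → α | {j ∈ S | v j ∈ A} = T} =
      #A ^ #T * #Aᶜ ^ (#S - #T) * card α ^ (card ι - #S) := by
  set t : ι → Finset α := fun j => if j ∈ T then A else if j ∈ S then Aᶜ else univ
  have hpi : ({v | {j ∈ S | v j ∈ A} = T} : Finset (ι → α)) = piFinset t := by
    ext v
    simp only [mem_filter_univ, mem_piFinset, t]
    constructor
    · rintro rfl j
      split_ifs <;> simp_all
    · intro h
      ext j
      have := h j
      by_cases hjT : j ∈ T
      · simp_all [hTS hjT]
      · split_ifs at this <;> simp_all
  have hT : ∀ j ∈ T, #(t j) = #A := fun j hj => by simp [t, hj]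
  have hST : ∀ j ∈ S \ T, #(t j) = #Aᶜ := fun j hj => by simp_all [t]
  have hS : ∀ j ∈ Sᶜ, #(t j) = card α := fun j hj => by
    have hjT : j ∉ T := fun h => (mem_compl.mp hj) (hTS h)
    simp_all [t]
  rw [hpi, card_piFinset, ← prod_mul_prod_compl S, ← prod_sdiff hTS, prod_congr rfl hT,
    prod_congr rfl hST, prod_congr rfl hS, prod_const, prod_const, prod_const,
    card_sdiff_of_subset hTS, card_compl S]
  ring

lemma card_filter_dvd_card_filter_mem_eq (A : Finset α) (S : Finset ι) (n : ℕ) :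
    #{v : ι → α | n ∣ #{j ∈ S | v j ∈ A}} =
      dvdBinomialSum #S n #A #Aᶜ * card α ^ (card ι - #S) := by
  rw [card_eq_sum_card_fiberwise (f := fun v => {j ∈ S | v j ∈ A})
    (t := S.powerset.filter (n ∣ #·)) (fun v hv => by simp_all [filter_subset])]
  have hfiber : ∀ T ∈ S.powerset.filter (n ∣ #·),
      #{v ∈ ({v | n ∣ #{j ∈ S | v j ∈ A}} : Finset (ι → α)) |
        {j ∈ S | v j ∈ A} = T} =
        #A ^ #T * #Aᶜ ^ (#S - #T) * card α ^ (card ι - #S) := by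
    intro T hT
    rw [mem_filter, mem_powerset] at hT
    rw [filter_filter, ← card_filter_mem_filter_eq A hT.1]
    congr 1
    ext v
    simp only [mem_filter_univ, and_iff_right_iff_imp]
    rintro rfl
    exact hT.2
  rw [sum_congr rfl hfiber, sum_filter,
    sum_powerset_apply_card (fun m => if n ∣ m then
      #A ^ m * #Aᶜ ^ (#S - m) * card α ^ (card ι - #S) else 0), dvdBinomialSum, sum_filter,
    sum_mul]
  refine sum_congr rfl fun m _ => ?_
  split_ifs <;> simp only [smul_eq_mul, mul_zero, zero_mul]
  ring

theorem exists_forall_sum_ne_zero_of_choose_mul_lt_s2 [Nonempty α] (A : Finset α) (n r L : ℕ)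
    (h : (card ι).choose L * dvdBinomialSum L n #A #Aᶜ ^ r < card α ^ (L * r)) :
    ∃ X : ι → Fin r → ZMod n, ∀ S : Finset ι, #S = L → ∑ j ∈ S, X j ≠ 0 := by
  rcases lt_or_ge (card ι) L with hL | hL
  · exact ⟨0, fun S hS _ => (hS ▸ card_le_univ S).not_gt hL⟩
  -- a random `σ` marks position `j` in coordinate `i` when `σ i j ∈ A`
  let X : (Fin r → ι → α) → ι → Fin r → ZMod n := fun σ j i =>
    if σ i j ∈ A then 1 else 0
  have hbad : ∀ S : Finset ι, #S = L → #{σ | ∑ j ∈ S, X σ j = 0} =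
      (dvdBinomialSum L n #A #Aᶜ * card α ^ (card ι - L)) ^ r := by
    intro S hS
    have : ({σ | ∑ j ∈ S, X σ j = 0} : Finset (Fin r → ι → α)) =
        piFinset fun _ => {v | n ∣ #{j ∈ S | v j ∈ A}} := by
      ext σ
      simp [X, funext_iff, Finset.sum_apply, sum_boole, ZMod.natCast_eq_zero_iff]
    rw [this, card_piFinset, prod_const, card_filter_dvd_card_filter_mem_eq, hS, card_univ,
      Fintype.card_fin]
  by_contra! hall
  have hcover : (univ : Finset (Fin r → ι → α)) ⊆
      (powersetCard L univ).biUnion fun S => {σ | ∑ j ∈ S, X σ j = 0} := by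
    intro σ _
    obtain ⟨S, hS, hσ⟩ := hall (X σ)
    simp only [mem_biUnion, mem_powersetCard_univ, mem_filter_univ]
    exact ⟨S, hS, hσ⟩
  have := (card_le_card hcover).trans card_biUnion_le
  rw [sum_congr rfl fun S hS => hbad S (mem_powersetCard_univ.mp hS), sum_const,
    card_powersetCard, card_univ, card_univ, Fintype.card_pi, prod_const, Fintype.card_fun,
    card_univ, Fintype.card_fin, smul_eq_mul] at this
  have hsplit : (card α ^ card ι) ^ r = card α ^ (L * r) * (card α ^ (card ι - L)) ^ r := by
    rw [← pow_mul, ← pow_mul, ← pow_add, ← add_mul, Nat.add_sub_cancel' hL]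
  rw [hsplit, mul_pow, ← mul_assoc] at this
  exact ((Nat.mul_lt_mul_right (by positivity)).mpr h).not_ge this

end Counting

lemma Nat.choose_mul_pow_mul_pow_le {M j : ℕ} (hj : j ≤ M) :
    M.choose j * j ^ j * (M - j) ^ (M - j) ≤ M ^ M := by
  have hterm := single_le_sum (f := fun i => j ^ i * (M - j) ^ (M - i) * M.choose i)
    (fun _ _ => Nat.zero_le _) (mem_range.mpr (show j < M + 1 by omega))
  have hsum := (add_pow j (M - j) M).symm
  simp only [Nat.cast_id, Nat.add_sub_cancel' hj] at hsum
  linarith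

lemma choose_mul_pow_mul_pow_le {M j : ℕ} (hj : j ≤ M) {x y : ℝ} (hx : 0 ≤ x)
    (hy : 0 ≤ y) :
    M.choose j * x ^ j * y ^ (M - j) ≤
      (M * x / j) ^ j * (M * y / (M - j : ℕ)) ^ (M - j) := by
  have hpos : (0 : ℝ) < (j : ℝ) ^ j * ((M - j : ℕ) : ℝ) ^ (M - j) := by
    exact_mod_cast Nat.mul_pos Nat.pow_self_pos Nat.pow_self_pos
  have hent : (M.choose j : ℝ) * j ^ j * ((M - j : ℕ) : ℝ) ^ (M - j) ≤ (M : ℝ) ^ M := by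
    exact_mod_cast Nat.choose_mul_pow_mul_pow_le hj
  rw [div_pow, div_pow, div_mul_div_comm, le_div_iff₀ hpos, mul_pow, mul_pow]
  calc (M.choose j : ℝ) * x ^ j * y ^ (M - j) * ((j : ℝ) ^ j * ((M - j : ℕ) : ℝ) ^ (M - j))
      = ((M.choose j : ℝ) * j ^ j * ((M - j : ℕ) : ℝ) ^ (M - j)) * (x ^ j * y ^ (M - j)) := by
        ring
    _ ≤ (M : ℝ) ^ M * (x ^ j * y ^ (M - j)) := by gcongr
    _ = (M : ℝ) ^ j * x ^ j * ((M : ℝ) ^ (M - j) * y ^ (M - j)) := by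
        rw [← pow_mul_pow_sub (M : ℝ) hj]
        ring

lemma add_one_le_exp_cubic {x : ℝ} (hx : 0 ≤ x) :
    x + 1 ≤ exp (x - x ^ 2 / 2 + x ^ 3 / 3) := by
  have hy : 0 ≤ x - x ^ 2 / 2 + x ^ 3 / 3 := by nlinarith [sq_nonneg (x - 3 / 4)]
  have htaylor := sum_le_exp_of_nonneg hy 4
  simp only [sum_range_succ, sum_range_zero, Nat.factorial] at htaylor
  norm_num at htaylor
  nlinarith [pow_nonneg hx 3, pow_nonneg hx 4, pow_nonneg hx 5, pow_nonneg hx 6,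
    pow_nonneg hx 7, pow_nonneg hx 8, pow_nonneg hx 9]

/-- `binomialRate k t p = exp (-k · KL(t / k ‖ p))`, the exponential rate of
`ℙ[Bin(k n, p) = t n]` in `n`. -/
noncomputable def binomialRate (k t : ℕ) (p : ℝ) : ℝ :=
  (k * p / t) ^ t * (k * (1 - p) / (k - t : ℕ)) ^ (k - t)

lemma choose_mul_pow_mul_pow_le_binomialRate_pow {k t : ℕ} (n : ℕ) (ht : t ≤ k) {p : ℝ}
    (hp0 : 0 ≤ p) (hp1 : p ≤ 1) :
    (k * n).choose (t * n) * p ^ (t * n) * (1 - p) ^ (k * n - t * n) ≤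
      binomialRate k t p ^ n := by
  rcases Nat.eq_zero_or_pos n with rfl | hn
  · simp
  have hn' : (n : ℝ) ≠ 0 := by positivity
  have h := choose_mul_pow_mul_pow_le (Nat.mul_le_mul_right n ht) hp0 (sub_nonneg.2 hp1)
  rw [← Nat.sub_mul] at h ⊢
  have h₁ : ((k * n : ℕ) : ℝ) * p / (t * n : ℕ) = k * p / t := by
    push_cast; rw [mul_right_comm, mul_div_mul_right _ _ hn']
  have h₂ : ((k * n : ℕ) : ℝ) * (1 - p) / ((k - t) * n : ℕ) =
      k * (1 - p) / (k - t : ℕ) := by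
    push_cast; rw [mul_right_comm, mul_div_mul_right _ _ hn']
  rw [h₁, h₂] at h
  rwa [binomialRate, mul_pow, ← pow_mul, ← pow_mul]

lemma nonneg_and_le_one_of_mul_le {k : ℕ} (hk : 3 ≤ k) {p : ℝ} (hp₀ : 1 / exp 1 ≤ k * p)
    (hp₁ : k * p ≤ 1 / exp 1 + 1 / (100 * k)) : 0 ≤ p ∧ p ≤ 1 := by
  have hk3 : (3 : ℝ) ≤ k := by exact_mod_cast hk
  have he := exp_one_gt_d9
  have hinv : 0 < 1 / exp 1 ∧ 1 / exp 1 < 1 / 2 := by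
    refine ⟨by positivity, ?_⟩
    rw [div_lt_div_iff₀ (exp_pos 1) (by norm_num)]
    linarith
  have : 1 / (100 * (k : ℝ)) ≤ 1 / 2 := by
    rw [div_le_div_iff₀ (by positivity) (by norm_num)]
    linarith
  constructor <;> nlinarith

lemma binomialRate_zero_le {k : ℕ} (hk : 0 < k) {p : ℝ} (hp₀ : 1 / exp 1 ≤ k * p)
    (hp1 : p ≤ 1) : binomialRate k 0 p ≤ exp (-(1 / exp 1)) := by
  have hk' : (k : ℝ) ≠ 0 := by positivity
  calc binomialRate k 0 p = (1 - k * p / k) ^ k := by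
        simp [binomialRate, mul_div_cancel_left₀ _ hk']
    _ ≤ exp (-(k * p)) := one_sub_div_pow_le_exp_neg (by nlinarith)
    _ ≤ exp (-(1 / exp 1)) := exp_le_exp.2 (by linarith)

lemma one_add_inv_mul_one_sub_pow_le {s : ℕ} (hs : 0 < s) {q : ℝ} (hq : q ≤ 1) :
    ((1 + 1 / s) * (1 - q)) ^ s ≤ exp (1 - 1 / (2 * s) + 1 / (3 * s ^ 2) - s * q) := by
  have hs' : (0 : ℝ) < s := by exact_mod_cast hs
  calc ((1 + 1 / s) * (1 - q)) ^ s
      ≤ (exp (1 / s - (1 / s) ^ 2 / 2 + (1 / s) ^ 3 / 3) * exp (-q)) ^ s := by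
        refine pow_le_pow_left₀ (by have := sub_nonneg.2 hq; positivity) ?_ s
        rw [add_comm (1 : ℝ)]
        exact mul_le_mul (add_one_le_exp_cubic (by positivity))
          (by linarith [add_one_le_exp (-q)]) (by linarith) (exp_pos _).le
    _ = exp (1 - 1 / (2 * s) + 1 / (3 * s ^ 2) - s * q) := by
        rw [← exp_add, ← exp_nat_mul]
        congr 1
        field_simp
        ring

lemma binomialRate_one_margin {s : ℝ} (hs : 2 ≤ s) :
    exp 1 / (100 * (s + 1)) + 1 / (exp 1 * (s + 1)) + 1 / (3 * s ^ 2) ≤ 1 / (2 * s) := by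
  have he := exp_one_gt_d9
  have he' := exp_one_lt_d9
  have hs0 : 0 < s := by linarith
  have he0 : 0 < exp 1 := exp_pos 1
  rw [← sub_nonneg]
  have : 1 / (2 * s) - (exp 1 / (100 * (s + 1)) + 1 / (exp 1 * (s + 1)) + 1 / (3 * s ^ 2)) =
      (150 * exp 1 * s * (s + 1) - 3 * exp 1 ^ 2 * s ^ 2 - 300 * s ^ 2 - 100 * exp 1 * (s + 1)) /
        (300 * exp 1 * s ^ 2 * (s + 1)) := by
    field_simp
    ring
  rw [this]
  apply div_nonneg _ (by positivity)
  nlinarith [mul_pos hs0 he0, mul_nonneg (sub_nonneg.2 hs) he0.le,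
    mul_nonneg (mul_nonneg (sub_nonneg.2 hs) he0.le) hs0.le]

-- The tight case: `(1 + 1/s)^s` must be expanded to third order in `1/s`.
lemma binomialRate_one_le {k : ℕ} (hk : 3 ≤ k) {p : ℝ} (hp₀ : 1 / exp 1 ≤ k * p)
    (hp₁ : k * p ≤ 1 / exp 1 + 1 / (100 * k)) :
    binomialRate k 1 p ≤ exp (-(1 / exp 1)) := by
  obtain ⟨hp0, hp1⟩ := nonneg_and_le_one_of_mul_le hk hp₀ hp₁
  obtain ⟨s, rfl⟩ : ∃ s, k = s + 1 := ⟨k - 1, by omega⟩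
  have hs : (2 : ℝ) ≤ s := by exact_mod_cast (by omega : 2 ≤ s)
  push_cast at hp₀ hp₁
  set e := exp 1
  have he0 : 0 < e := exp_pos 1
  have hmarked : ((s : ℝ) + 1) * p ≤ exp (e / (100 * (s + 1)) - 1) := by
    rw [exp_sub]
    calc ((s : ℝ) + 1) * p ≤ (1 + e / (100 * (s + 1))) / e := by
          convert hp₁ using 1
          field_simp
      _ ≤ exp (e / (100 * (s + 1))) / e := by
          gcongr
          linarith [add_one_le_exp (e / (100 * (s + 1)))]
  have hunmarked : ((s + 1 : ℕ) * (1 - p) / s) ^ s ≤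
      exp (1 - 1 / (2 * s) + 1 / (3 * s ^ 2) - s / (e * (s + 1))) := by
    have hsp : s / (e * (s + 1)) ≤ s * p := by
      rw [div_le_iff₀ (by positivity)]
      rw [div_le_iff₀ he0] at hp₀
      nlinarith
    calc ((s + 1 : ℕ) * (1 - p) / s) ^ s = ((1 + 1 / s) * (1 - p)) ^ s := by
          push_cast
          field_simp
      _ ≤ exp (1 - 1 / (2 * s) + 1 / (3 * s ^ 2) - s * p) :=
          one_add_inv_mul_one_sub_pow_le (by omega) hp1
      _ ≤ _ := by gcongr
  calc binomialRate (s + 1) 1 p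
      ≤ exp (e / (100 * (s + 1)) - 1) *
          exp (1 - 1 / (2 * s) + 1 / (3 * s ^ 2) - s / (e * (s + 1))) := by
        simp only [binomialRate, Nat.cast_one, div_one, pow_one, Nat.add_sub_cancel]
        push_cast at hunmarked ⊢
        gcongr
    _ ≤ exp (-(1 / e)) := by
        rw [← exp_add, exp_le_exp]
        have hsplit : s / (e * (s + 1)) = 1 / e - 1 / (e * (s + 1)) := by
          field_simp
          ring
        linarith [binomialRate_one_margin hs]

lemma div_sub_pow_le_exp {k t : ℕ} (htk : t ≤ k) :
    ((k : ℝ) / (k - t : ℕ)) ^ (k - t) ≤ exp t := by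
  rcases Nat.eq_zero_or_pos (k - t) with h | h
  · simp [h, one_le_exp (Nat.cast_nonneg t)]
  have hk : (k : ℝ) / (k - t : ℕ) = 1 - (-t) / (k - t : ℕ) := by
    rw [neg_div, sub_neg_eq_add, one_add_div (by positivity), Nat.cast_sub htk, sub_add_cancel]
  have hnonneg : -(t : ℝ) ≤ (k - t : ℕ) := by
    linarith [Nat.cast_nonneg (α := ℝ) (k - t), Nat.cast_nonneg (α := ℝ) t]
  calc ((k : ℝ) / (k - t : ℕ)) ^ (k - t) = (1 - (-t) / (k - t : ℕ)) ^ (k - t) := by rw [hk]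
    _ ≤ exp (-(-t)) := one_sub_div_pow_le_exp_neg hnonneg
    _ = exp t := by rw [neg_neg]

lemma binomialRate_le_of_two_le {k t : ℕ} (hk : 3 ≤ k) (ht : 2 ≤ t) (htk : t ≤ k) {p : ℝ}
    (hp₀ : 1 / exp 1 ≤ k * p) (hp₁ : k * p ≤ 1 / exp 1 + 1 / (100 * k)) :
    binomialRate k t p ≤ exp (-(1 / exp 1)) := by
  obtain ⟨hp0, hp1⟩ := nonneg_and_le_one_of_mul_le hk hp₀ hp₁
  have he := exp_one_gt_d9
  have he' := exp_one_lt_d9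
  have he0 : 0 < exp 1 := exp_pos 1
  have hk3 : (3 : ℝ) ≤ k := by exact_mod_cast hk
  have ht2 : (2 : ℝ) ≤ t := by exact_mod_cast ht
  have hkp : k * p ≤ 1.01 / exp 1 := by
    have : 1 / (100 * (k : ℝ)) ≤ 0.01 / exp 1 := by
      rw [div_le_div_iff₀ (by positivity) he0]
      nlinarith
    linarith [show 1 / exp 1 + 0.01 / exp 1 = 1.01 / exp 1 by ring]
  have hmarked : (k * p / t) ^ t ≤ (1.01 / (exp 1 * t)) ^ t := by
    rw [← div_div]
    gcongr
  have hunmarked : (k * (1 - p) / (k - t : ℕ)) ^ (k - t) ≤ exp t := by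
    refine le_trans ?_ (div_sub_pow_le_exp htk)
    have : 0 ≤ 1 - p := by linarith
    gcongr
    nlinarith
  calc binomialRate k t p ≤ (1.01 / (exp 1 * t)) ^ t * exp t := by
        unfold binomialRate
        have : 0 ≤ 1 - p := by linarith
        gcongr
    _ = (1.01 / t) ^ t := by
        rw [← exp_one_pow, ← mul_pow]
        congr 1
        field_simp
    _ ≤ (1.01 / t) ^ 2 :=
        pow_le_pow_of_le_one (by positivity) (by rw [div_le_one (by positivity)]; linarith) ht
    _ ≤ (1.01 / 2) ^ 2 := by gcongr
    _ ≤ exp (-(1 / exp 1)) := by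
        have : 1 / exp 1 ≤ 1 / 2.7 := by gcongr; linarith
        nlinarith [add_one_le_exp (-(1 / exp 1))]

lemma binomialRate_le {k t : ℕ} (hk : 3 ≤ k) (htk : t ≤ k) {p : ℝ}
    (hp₀ : 1 / exp 1 ≤ k * p) (hp₁ : k * p ≤ 1 / exp 1 + 1 / (100 * k)) :
    binomialRate k t p ≤ exp (-(1 / exp 1)) := by
  match t, htk with
  | 0, _ =>
    exact binomialRate_zero_le (by omega) hp₀ (nonneg_and_le_one_of_mul_le hk hp₀ hp₁).2
  | 1, _ => exact binomialRate_one_le hk hp₀ hp₁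
  | t + 2, htk => exact binomialRate_le_of_two_le hk (by omega) htk hp₀ hp₁

lemma choose_mul_pow_mul_sub_pow_le {k n t a b : ℕ} (hk : 3 ≤ k) (htk : t ≤ k)
    (hp₀ : 1 / exp 1 ≤ k * (a / b)) (hp₁ : k * (a / b) ≤ 1 / exp 1 + 1 / (100 * k)) :
    ((k * n).choose (t * n) : ℝ) * a ^ (t * n) * (b - a) ^ (k * n - t * n) ≤
      exp (-(n / exp 1)) * b ^ (k * n) := by
  set p : ℝ := a / b
  obtain ⟨hp0, hp1⟩ := nonneg_and_le_one_of_mul_le hk hp₀ hp₁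
  have hb : (b : ℝ) ≠ 0 := by
    rintro hb
    simp only [p, hb, div_zero, mul_zero] at hp₀
    linarith [one_div_pos.2 (exp_pos 1)]
  have ha : (a : ℝ) = p * b := (div_mul_cancel₀ _ hb).symm
  have hrate : 0 ≤ binomialRate k t p := by
    unfold binomialRate
    have := sub_nonneg.2 hp1
    positivity
  calc ((k * n).choose (t * n) : ℝ) * a ^ (t * n) * (b - a) ^ (k * n - t * n)
      = (k * n).choose (t * n) * p ^ (t * n) * (1 - p) ^ (k * n - t * n) *
          (b ^ (t * n) * b ^ (k * n - t * n)) := by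
        rw [show (b : ℝ) - a = (1 - p) * b by rw [ha]; ring, ha, mul_pow, mul_pow]
        ring
    _ = (k * n).choose (t * n) * p ^ (t * n) * (1 - p) ^ (k * n - t * n) * b ^ (k * n) := by
        rw [pow_mul_pow_sub _ (Nat.mul_le_mul_right n htk)]
    _ ≤ binomialRate k t p ^ n * b ^ (k * n) := by
        gcongr
        exact choose_mul_pow_mul_pow_le_binomialRate_pow n htk hp0 hp1
    _ ≤ exp (-(1 / exp 1)) ^ n * b ^ (k * n) := by
        gcongr
        exact binomialRate_le hk htk hp₀ hp₁
    _ = exp (-(n / exp 1)) * b ^ (k * n) := by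
        rw [← exp_nat_mul]
        ring_nf

lemma dvdBinomialSum_le {k n a b : ℕ} (hk : 3 ≤ k) (hn : 0 < n) (hab : a ≤ b)
    (hp₀ : 1 / exp 1 ≤ k * (a / b)) (hp₁ : k * (a / b) ≤ 1 / exp 1 + 1 / (100 * k)) :
    (dvdBinomialSum (k * n) n a (b - a) : ℝ) ≤ (k + 1) * exp (-(n / exp 1)) * b ^ (k * n) := by
  set F := (range (k * n + 1)).filter (n ∣ ·)
  have hF : ∀ m ∈ F, ∃ t < k + 1, t * n = m := fun m hm => by
    obtain ⟨hm, t, rfl⟩ := mem_filter.1 hm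
    rw [mem_range] at hm
    exact ⟨t, by nlinarith, mul_comm t n⟩
  have hterm : ∀ m ∈ F, (((k * n).choose m * a ^ m * (b - a) ^ (k * n - m) : ℕ) : ℝ) ≤
      exp (-(n / exp 1)) * b ^ (k * n) := fun m hm => by
    obtain ⟨t, htk, rfl⟩ := hF m hm
    push_cast [Nat.cast_sub hab]
    exact choose_mul_pow_mul_sub_pow_le hk (by omega) hp₀ hp₁
  have hcard : #F ≤ k + 1 := by
    calc #F ≤ #((range (k + 1)).image (· * n)) := card_le_card fun m hm => by
          obtain ⟨t, htk, rfl⟩ := hF m hm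
          exact mem_image.2 ⟨t, mem_range.2 htk, rfl⟩
      _ ≤ k + 1 := card_image_le.trans (card_range _).le
  calc (dvdBinomialSum (k * n) n a (b - a) : ℝ)
      = ∑ m ∈ F, (((k * n).choose m * a ^ m * (b - a) ^ (k * n - m) : ℕ) : ℝ) := by
        rw [dvdBinomialSum, Nat.cast_sum]
    _ ≤ #F • (exp (-(n / exp 1)) * (b : ℝ) ^ (k * n)) := sum_le_card_nsmul _ _ _ hterm
    _ ≤ (k + 1) * exp (-(n / exp 1)) * b ^ (k * n) := by
        rw [nsmul_eq_mul, mul_assoc]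
        gcongr
        exact_mod_cast hcard

lemma choose_le_exp_one_mul_div_pow_s2 (K L : ℕ) : (K.choose L : ℝ) ≤ (exp 1 * K / L) ^ L := by
  have hL : (0 : ℝ) < (L : ℝ) ^ L := by exact_mod_cast Nat.pow_self_pos
  have hstirling : (L : ℝ) ^ L ≤ exp L * L.factorial := by
    rw [← div_le_iff₀ (by positivity)]
    exact pow_div_factorial_le_exp _ (Nat.cast_nonneg L) L
  calc (K.choose L : ℝ) ≤ (K : ℝ) ^ L / L.factorial := Nat.choose_le_pow_div L K
    _ ≤ exp L * K ^ L / L ^ L := by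
        rw [div_le_div_iff₀ (by positivity) hL]
        calc (K : ℝ) ^ L * L ^ L ≤ K ^ L * (exp L * L.factorial) := by gcongr
          _ = exp L * K ^ L * L.factorial := by ring
    _ = (exp 1 * K / L) ^ L := by rw [div_pow, mul_pow, exp_one_pow]

lemma choose_mul_pow_lt_pow {K k n r : ℕ} (hk : 0 < k) (hn : 0 < n) {W b D : ℝ} (hb : 0 < b)
    (hW0 : 0 ≤ W) (hW : W ≤ (k + 1) * exp (-(n / exp 1)) * b ^ (k * n)) (hD0 : 0 ≤ D)
    (hD : D ≤ exp (1 / (exp 1 * k) - 1 / n)) (hK : (K : ℝ) ≤ k * n / 4 * D ^ r) :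
    K.choose (k * n) * W ^ r < (b ^ (k * n)) ^ r := by
  have he := exp_one_lt_d9
  have hL : (0 : ℝ) < (k * n : ℕ) := by positivity
  have hchoose : (K.choose (k * n) : ℝ) ≤ (exp 1 / 4 * D ^ r) ^ (k * n) := by
    refine (choose_le_exp_one_mul_div_pow_s2 K (k * n)).trans (pow_le_pow_left₀ (by positivity) ?_ _)
    rw [div_le_iff₀ hL]
    push_cast
    nlinarith [exp_pos 1]
  -- the `- 1 / n` in `D` pays exactly for the `k + 1 ≤ e ^ k` outcomes
  have hDL : D ^ (k * n) * ((k + 1) * exp (-(n / exp 1))) ≤ 1 := by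
    calc D ^ (k * n) * ((k + 1) * exp (-(n / exp 1)))
        ≤ exp ((k * n : ℕ) * (1 / (exp 1 * k) - 1 / n)) * (exp k * exp (-(n / exp 1))) := by
          rw [exp_nat_mul]
          gcongr
          linarith [add_one_le_exp (k : ℝ)]
      _ = 1 := by
          rw [← exp_add, ← exp_add, exp_eq_one_iff]
          push_cast
          field_simp
          ring
  have hc : 0 ≤ ((k : ℝ) + 1) * exp (-(n / exp 1)) := by positivity
  generalize ((k : ℝ) + 1) * exp (-(n / exp 1)) = c at hc hW hDL
  calc (K.choose (k * n) : ℝ) * W ^ r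
      ≤ (exp 1 / 4 * D ^ r) ^ (k * n) * (c * b ^ (k * n)) ^ r := by
        gcongr
    _ = (exp 1 / 4) ^ (k * n) * (D ^ (k * n) * c) ^ r * (b ^ (k * n)) ^ r := by ring
    _ ≤ (exp 1 / 4) ^ (k * n) * 1 ^ r * (b ^ (k * n)) ^ r := by
        gcongr
    _ < (b ^ (k * n)) ^ r := by
        rw [one_pow, mul_one]
        refine mul_lt_of_lt_one_left (by positivity)
          (pow_lt_one₀ (by positivity) ?_ (by positivity))
        rw [div_lt_one (by norm_num)]
        linarith

lemma exists_lt_mul_div_mem {k : ℕ} (hk : 0 < k) : ∃ a b : ℕ, a < b ∧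
    1 / exp 1 ≤ k * (a / b : ℝ) ∧ k * (a / b : ℝ) ≤ 1 / exp 1 + 1 / (100 * k) := by
  have he := exp_one_gt_d9
  have hk1 : (1 : ℝ) ≤ k := by exact_mod_cast hk
  set x : ℝ := 100 * k / exp 1
  have hx : 0 ≤ x := by positivity
  have hkab : ∀ a : ℝ, k * (a / (100 * k ^ 2 : ℕ)) = a / (100 * k) := fun a => by
    push_cast; field_simp
  refine ⟨⌈x⌉₊, 100 * k ^ 2, ?_, ?_, ?_⟩
  · have h1 := Nat.ceil_lt_add_one hx
    have h2 : x ≤ 100 * k / 2 :=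
      div_le_div_of_nonneg_left (by positivity) (by norm_num) (by linarith)
    exact_mod_cast (show (⌈x⌉₊ : ℝ) < (100 * k ^ 2 : ℕ) by push_cast; nlinarith)
  · rw [hkab, le_div_iff₀ (by positivity)]
    calc 1 / exp 1 * (100 * k) = x := by ring
      _ ≤ ⌈x⌉₊ := Nat.le_ceil x
  · rw [hkab, div_le_iff₀ (by positivity)]
    have := Nat.ceil_lt_add_one hx
    calc (⌈x⌉₊ : ℝ) ≤ x + 1 := this.le
      _ = (1 / exp 1 + 1 / (100 * k)) * (100 * k) := by simp only [x]; field_simp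

theorem egz_lower_bound_general :
    ∃ C : ℝ, C > 0 ∧ ∀ k n r : ℕ, 3 ≤ k → 1 ≤ n → 1 ≤ r →
      ∃ X : Fin (⌊(k * n / 4 : ℝ) *
            (max (1 + 1 / (Real.exp 1 * k) - C / n) 0) ^ r⌋₊) →
          (Fin r → ZMod n),
        ∀ S : Finset (Fin (⌊(k * n / 4 : ℝ) *
            (max (1 + 1 / (Real.exp 1 * k) - C / n) 0) ^ r⌋₊)),
          S.card = k * n → ∑ j ∈ S, X j ≠ 0 := by
  refine ⟨1, one_pos, fun k n r hk hn _ => ?_⟩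
  obtain ⟨a, b, hab, hp₀, hp₁⟩ := exists_lt_mul_div_mem (k := k) (by omega)
  have hD : max (1 + 1 / (exp 1 * k) - 1 / n) 0 ≤ exp (1 / (exp 1 * k) - 1 / n) :=
    max_le (by linarith [add_one_le_exp (1 / (exp 1 * k) - 1 / n)]) (exp_pos _).le
  have : Nonempty (Fin b) := ⟨⟨a, hab⟩⟩
  refine exists_forall_sum_ne_zero_of_choose_mul_lt_s2 (Iio (⟨a, hab⟩ : Fin b)) n r (k * n) ?_
  rw [card_compl, Fin.card_Iio, Fintype.card_fin, Fintype.card_fin, pow_mul,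
    ← Nat.cast_lt (α := ℝ)]
  push_cast
  exact choose_mul_pow_lt_pow (by omega) hn (Nat.cast_pos.2 (Nat.zero_lt_of_lt hab))
    (by positivity) (dvdBinomialSum_le hk hn hab.le hp₀ hp₁) (le_max_right _ _) hD
    (Nat.floor_le (by positivity))
end

section
/- For every integer n ≥ 1, the real number (1/5)^(2n) + (choose (2n) n) · (4/25)^n + (4/5)^(2n) is strictly less than (1 + n^(−1/2)) · (4/5)^(2n). -/
lemma cb_sq_bound (n : ℕ) : (Nat.centralBinom n)^2 * (3*n+1) ≤ 16^n := by
  induction n with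
  | zero => simp [Nat.centralBinom]
  | succ n ih =>
    have key := Nat.succ_mul_centralBinom_succ n
    have hpos : 0 < (n+1)^2 * (3*n+1) := by positivity
    have h1 : ((n+1) * Nat.centralBinom (n+1))^2 * ((3*(n+1)+1) * (3*n+1))
        = (2*(2*n+1))^2 * (3*(n+1)+1) * ((Nat.centralBinom n)^2 * (3*n+1)) := by
      rw [key]; ring
    have h2 : (2*(2*n+1))^2 * (3*(n+1)+1) * ((Nat.centralBinom n)^2 * (3*n+1))
        ≤ (2*(2*n+1))^2 * (3*(n+1)+1) * 16^n :=
      Nat.mul_le_mul_left _ ih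
    have h3 : (2*(2*n+1))^2 * (3*(n+1)+1) ≤ 16 * ((n+1)^2 * (3*n+1)) := by nlinarith
    have h4 : ((n+1) * Nat.centralBinom (n+1))^2 * ((3*(n+1)+1) * (3*n+1))
        ≤ (n+1)^2 * (3*n+1) * (16^(n+1)) := by
      calc ((n+1) * Nat.centralBinom (n+1))^2 * ((3*(n+1)+1) * (3*n+1))
          ≤ (2*(2*n+1))^2 * (3*(n+1)+1) * 16^n := le_trans (le_of_eq h1) h2
        _ ≤ 16 * ((n+1)^2 * (3*n+1)) * 16^n := Nat.mul_le_mul_right _ h3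
        _ = (n+1)^2 * (3*n+1) * (16^(n+1)) := by ring
    have h5 : ((n+1) * Nat.centralBinom (n+1))^2 * ((3*(n+1)+1) * (3*n+1))
        = (n+1)^2 * (3*n+1) * ((Nat.centralBinom (n+1))^2 * (3*(n+1)+1)) := by ring
    rw [h5] at h4
    exact Nat.le_of_mul_le_mul_left h4 hpos

lemma sixteen_pow_ge (n : ℕ) : 16 * n ≤ 16^n := by
  induction n with
  | zero => simp
  | succ n ih =>
    rcases Nat.eq_zero_or_pos n with h | h
    · subst h; norm_num
    · have h16 : (16:ℕ) ≤ 16^n := Nat.le_self_pow h.ne' 16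
      rw [pow_succ]
      nlinarith

theorem prob_Q_bound (n : ℕ) (hn : 1 ≤ n) :
    (1 / 5 : ℝ) ^ (2 * n) + (Nat.choose (2 * n) n : ℝ) * (4 / 25 : ℝ) ^ n + (4 / 5 : ℝ) ^ (2 * n)
      < (1 + (n : ℝ) ^ (-(1 : ℝ) / 2)) * (4 / 5 : ℝ) ^ (2 * n) := by
  have hn1 : (1:ℝ) ≤ n := by exact_mod_cast hn
  set s := Real.sqrt n with hs
  set t := Real.sqrt (3*n+1) with ht
  have hs1 : 1 ≤ s := by
    rw [hs, show (1:ℝ) = Real.sqrt 1 from (Real.sqrt_one).symm]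
    exact Real.sqrt_le_sqrt hn1
  have hs0 : 0 < s := lt_of_lt_of_le one_pos hs1
  have hssq : s^2 = n := Real.sq_sqrt (by positivity)
  have ht0 : 0 < t := Real.sqrt_pos.mpr (by positivity)
  have htsq : t^2 = 3*n+1 := Real.sq_sqrt (by positivity)
  -- rpow equals inverse sqrt
  have hrpow : (n : ℝ) ^ (-(1 : ℝ) / 2) = 1/s := by
    rw [hs, Real.sqrt_eq_rpow, show (-(1:ℝ)/2) = -(1/2) by norm_num,
      Real.rpow_neg (by positivity), one_div]
    rw [one_div]
  -- central binomial bound : choose(2n,n) * t ≤ 4^n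
  have hcb : (Nat.choose (2*n) n : ℝ) * t ≤ 4^n := by
    have h' : ((Nat.choose (2*n) n : ℝ))^2 * (3*(n:ℝ)+1) ≤ 16^n := by
      have h := cb_sq_bound n
      have : Nat.centralBinom n = Nat.choose (2*n) n := rfl
      rw [this] at h
      exact_mod_cast h
    have hc0 : (0:ℝ) ≤ (Nat.choose (2*n) n : ℝ) := by positivity
    have hsq : ((Nat.choose (2*n) n : ℝ) * t)^2 ≤ ((4:ℝ)^n)^2 := by
      rw [mul_pow, htsq]
      calc ((Nat.choose (2*n) n : ℝ))^2 * (3*(n:ℝ)+1) ≤ 16^n := h'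
        _ = ((4:ℝ)^n)^2 := by
            rw [show (16:ℝ) = 4^2 by norm_num, ← pow_mul, ← pow_mul, Nat.mul_comm]
    have h4pos : (0:ℝ) < 4^n := by positivity
    nlinarith [mul_nonneg hc0 ht0.le]
  -- √3 s ≤ t
  have hr3 : (0:ℝ) < Real.sqrt 3 := Real.sqrt_pos.mpr (by norm_num)
  have hts : Real.sqrt 3 * s ≤ t := by
    rw [hs, ht, ← Real.sqrt_mul (by norm_num : (0:ℝ) ≤ 3)]
    exact Real.sqrt_le_sqrt (by nlinarith)
  -- (1/16)^n ≤ 1/(16 s)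
  have h16n : ((1:ℝ)/16)^n ≤ 1/(16*s) := by
    have hnat : (16:ℝ) * n ≤ 16^n := by exact_mod_cast sixteen_pow_ge n
    have hsn : 16 * s ≤ 16 * (n:ℝ) := by nlinarith
    have h1 : ((1:ℝ)/16)^n = 1/16^n := by rw [div_pow, one_pow]
    rw [h1]
    apply one_div_le_one_div_of_le (by positivity)
    linarith
  -- 1/t ≤ 1/(√3 s)
  have h1t : 1/t ≤ 1/(Real.sqrt 3 * s) :=
    one_div_le_one_div_of_le (by positivity) hts
  -- key: (1/16)^n + 1/t < 1/s
  have hfrac : (1:ℝ)/16 + 1/Real.sqrt 3 < 1 := by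
    have h3 : (16:ℝ)/15 < Real.sqrt 3 := by
      nlinarith [Real.sq_sqrt (show (0:ℝ) ≤ 3 by norm_num), Real.sqrt_nonneg (3:ℝ)]
    have : 1/Real.sqrt 3 < 15/16 := by
      rw [div_lt_div_iff₀ hr3 (by norm_num : (0:ℝ) < 16)]
      nlinarith
    linarith
  have hkey : ((1:ℝ)/16)^n + 1/t < 1/s := by
    calc ((1:ℝ)/16)^n + 1/t ≤ 1/(16*s) + 1/(Real.sqrt 3 * s) := add_le_add h16n h1t
      _ = (1/16 + 1/Real.sqrt 3) * (1/s) := by field_simp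
      _ < 1 * (1/s) := by
          apply mul_lt_mul_of_pos_right hfrac (by positivity)
      _ = 1/s := one_mul _
  -- assemble
  have hP : (0:ℝ) < (16/25:ℝ)^n := by positivity
  have e1 : ((1:ℝ)/5)^(2*n) = (16/25:ℝ)^n * ((1:ℝ)/16)^n := by
    rw [pow_mul, ← mul_pow]; norm_num
  have e2 : ((4:ℝ)/5)^(2*n) = (16/25:ℝ)^n := by
    rw [pow_mul]; norm_num
  have hcb' : (Nat.choose (2*n) n : ℝ) * (4/25:ℝ)^n ≤ (16/25:ℝ)^n * (1/t) := by
    have h425 : (0:ℝ) ≤ (4/25:ℝ)^n := by positivity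
    have hm := mul_le_mul_of_nonneg_right hcb h425
    have e3 : (4:ℝ)^n * (4/25:ℝ)^n = (16/25:ℝ)^n := by
      rw [← mul_pow]; norm_num
    have : (Nat.choose (2*n) n : ℝ) * (4/25:ℝ)^n ≤ (16/25:ℝ)^n / t := by
      rw [le_div_iff₀ ht0]
      nlinarith [hm, e3]
    rw [mul_one_div]
    exact this
  rw [hrpow, e1, e2]
  have expand : (1 + 1/s) * (16/25:ℝ)^n = (16/25:ℝ)^n + (16/25:ℝ)^n * (1/s) := by ring
  rw [expand]
  have : (16/25:ℝ)^n * ((1:ℝ)/16)^n + (16/25:ℝ)^n * (1/t) < (16/25:ℝ)^n * (1/s) := by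
    have := mul_lt_mul_of_pos_left hkey hP
    calc (16/25:ℝ)^n * ((1:ℝ)/16)^n + (16/25:ℝ)^n * (1/t)
        = (16/25:ℝ)^n * (((1:ℝ)/16)^n + 1/t) := by ring
      _ < (16/25:ℝ)^n * (1/s) := this
  linarith [hcb']
end

section
/- Let k ≥ 1 and n ≥ 1 be integers and let q be a real number with 0 < q ≤ 1/(e·k + 1). Then ∑_{i=0}^{k} (choose (k·n) (i·n)) · q^(i·n) · (1−q)^((k−i)·n) ≤ (k+1) · (1−q)^(k·n). -/
lemma choose_le_exp_pow (N r : ℕ) (hr : 1 ≤ r) :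
    (N.choose r : ℝ) ≤ (Real.exp 1 * N / r) ^ r := by
  have hrp : (0:ℝ) < r := by exact_mod_cast hr
  have hrf : (0:ℝ) < (r.factorial : ℝ) := by exact_mod_cast r.factorial_pos
  have h1 : (N.choose r : ℝ) ≤ (N:ℝ)^r / r.factorial := Nat.choose_le_pow_div r N
  have h2 : (r:ℝ)^r / r.factorial ≤ Real.exp r :=
    Real.pow_div_factorial_le_exp _ (by positivity) r
  have h3 : Real.exp (r:ℝ) = Real.exp 1 ^ r := by
    rw [← Real.exp_nat_mul, mul_one]
  have h2' : (r:ℝ)^r ≤ Real.exp 1 ^ r * r.factorial := by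
    rw [div_le_iff₀ hrf, h3] at h2; linarith
  refine h1.trans ?_
  rw [div_pow, mul_pow, div_le_div_iff₀ hrf (by positivity)]
  calc (N:ℝ)^r * (r:ℝ)^r ≤ (N:ℝ)^r * (Real.exp 1 ^ r * r.factorial) := by
        exact mul_le_mul_of_nonneg_left h2' (by positivity)
    _ = (Real.exp 1)^r * (N:ℝ)^r * r.factorial := by ring

theorem prob_Q_bound_general (k n : ℕ) (hk : 1 ≤ k) (hn : 1 ≤ n) (q : ℝ)
    (hq0 : 0 < q) (hq1 : q ≤ 1 / (Real.exp 1 * k + 1)) :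
    ∑ i ∈ Finset.range (k + 1),
        (Nat.choose (k * n) (i * n) : ℝ) * q ^ (i * n) * (1 - q) ^ ((k - i) * n)
      ≤ (k + 1) * (1 - q) ^ (k * n) := by
  have hkp : (0:ℝ) < k := by exact_mod_cast hk
  have hek : (0:ℝ) < Real.exp 1 * k := mul_pos (Real.exp_pos 1) hkp
  have hq1' : q * (Real.exp 1 * k + 1) ≤ 1 := by
    rw [le_div_iff₀ (by linarith)] at hq1; exact hq1
  have hqlt : q < 1 := by nlinarith
  have h1q : (0:ℝ) < 1 - q := by linarith
  have hkey : Real.exp 1 * k * q ≤ 1 - q := by nlinarith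
  have hterm : ∀ i ∈ Finset.range (k + 1),
      (Nat.choose (k * n) (i * n) : ℝ) * q ^ (i * n) * (1 - q) ^ ((k - i) * n)
        ≤ (1 - q) ^ (k * n) := by
    intro i hi
    rw [Finset.mem_range] at hi
    have hik : i ≤ k := by omega
    rcases Nat.eq_zero_or_pos i with h0 | hipos
    · subst h0; simp
    · have hr : 1 ≤ i * n := Nat.one_le_iff_ne_zero.mpr (by positivity)
      have hip : (0:ℝ) < i := by exact_mod_cast hipos
      have hnp : (0:ℝ) < n := by exact_mod_cast hn
      have hc := choose_le_exp_pow (k * n) (i * n) hr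
      have hdiv : Real.exp 1 * (↑(k * n)) / (↑(i * n)) = Real.exp 1 * k / i := by
        push_cast; field_simp
      rw [hdiv] at hc
      have hbase : Real.exp 1 * k / i * q ≤ 1 - q := by
        refine le_trans ?_ hkey
        have : Real.exp 1 * k / i ≤ Real.exp 1 * k :=
          div_le_self (le_of_lt hek) (by exact_mod_cast hipos)
        nlinarith
      have hbnn : (0:ℝ) ≤ Real.exp 1 * k / i * q := by positivity
      have hmain : (Nat.choose (k * n) (i * n) : ℝ) * q ^ (i * n) ≤ (1 - q) ^ (i * n) := by
        calc (Nat.choose (k * n) (i * n) : ℝ) * q ^ (i * n)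
            ≤ (Real.exp 1 * k / i) ^ (i * n) * q ^ (i * n) := by
              exact mul_le_mul_of_nonneg_right hc (by positivity)
          _ = (Real.exp 1 * k / i * q) ^ (i * n) := by rw [mul_pow]
          _ ≤ (1 - q) ^ (i * n) := pow_le_pow_left₀ hbnn hbase _
      have hsplit : i * n + (k - i) * n = k * n := by
        have : i * n + (k - i) * n = (i + (k - i)) * n := by ring
        rw [this, Nat.add_sub_cancel' hik]
      calc (Nat.choose (k * n) (i * n) : ℝ) * q ^ (i * n) * (1 - q) ^ ((k - i) * n)
          ≤ (1 - q) ^ (i * n) * (1 - q) ^ ((k - i) * n) :=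
            mul_le_mul_of_nonneg_right hmain (by positivity)
        _ = (1 - q) ^ (k * n) := by rw [← pow_add, hsplit]
  calc ∑ i ∈ Finset.range (k + 1),
        (Nat.choose (k * n) (i * n) : ℝ) * q ^ (i * n) * (1 - q) ^ ((k - i) * n)
      ≤ ∑ _i ∈ Finset.range (k + 1), (1 - q) ^ (k * n) := Finset.sum_le_sum hterm
    _ = (k + 1) * (1 - q) ^ (k * n) := by
        rw [Finset.sum_const, Finset.card_range]; push_cast; ring
end

section
/- Let k ≥ 1 and n ≥ 1 be integers, let i be an integer with 0 ≤ i ≤ k, and let q be a real number with 0 < q ≤ 1/(e·k + 1). Then (choose (k·n) (i·n)) · q^(i·n) · (1−q)^((k−i)·n) ≤ (1−q)^(k·n). -/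
open Nat in

lemma pow_self_le_exp_pow_factorial (m : ℕ) :
    (m : ℝ) ^ m ≤ Real.exp 1 ^ m * (Nat.factorial m) := by
  induction m with
  | zero => simp
  | succ m ih =>
    have key : ((m : ℝ) + 1) ^ m ≤ Real.exp 1 * (m : ℝ) ^ m := by
      rcases Nat.eq_zero_or_pos m with h | h
      · simp [h, Real.one_le_exp (by norm_num : (0:ℝ) ≤ 1)]
      · have hm : (0:ℝ) < m := by exact_mod_cast h
        have h1 : (m : ℝ) + 1 = (m : ℝ) * (1 + 1 / m) := by field_simp
        have h2 : (1 : ℝ) + 1 / m ≤ Real.exp (1 / m) := by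
          have := Real.add_one_le_exp (1 / (m:ℝ))
          linarith
        have h3 : ((m : ℝ) + 1) ^ m ≤ ((m : ℝ) * Real.exp (1 / m)) ^ m := by
          apply pow_le_pow_left₀ (by positivity)
          rw [h1]
          exact mul_le_mul_of_nonneg_left h2 hm.le
        calc ((m : ℝ) + 1) ^ m ≤ ((m : ℝ) * Real.exp (1 / m)) ^ m := h3
          _ = (m : ℝ) ^ m * Real.exp (1 / m) ^ m := mul_pow _ _ _
          _ = (m : ℝ) ^ m * Real.exp ((m : ℕ) * (1 / m)) := by
              rw [← Real.exp_nat_mul]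
          _ = Real.exp 1 * (m : ℝ) ^ m := by
              rw [mul_one_div, div_self (ne_of_gt hm)]
              ring
    have hfac : (0:ℝ) ≤ ((Nat.factorial m) : ℝ) := by positivity
    have hexp : (0:ℝ) ≤ Real.exp 1 ^ m := by positivity
    calc ((m + 1 : ℕ) : ℝ) ^ (m + 1)
        = ((m : ℝ) + 1) * ((m : ℝ) + 1) ^ m := by push_cast; ring
      _ ≤ ((m : ℝ) + 1) * (Real.exp 1 * (m : ℝ) ^ m) :=
          mul_le_mul_of_nonneg_left key (by positivity)
      _ ≤ ((m : ℝ) + 1) * (Real.exp 1 * (Real.exp 1 ^ m * (Nat.factorial m))) := by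
          have := mul_le_mul_of_nonneg_left ih (Real.exp_pos 1).le
          apply mul_le_mul_of_nonneg_left this (by positivity)
      _ = Real.exp 1 ^ (m + 1) * ((m + 1) ! : ℝ) := by
          rw [Nat.factorial_succ]
          push_cast
          ring

theorem term_dominated_by_P0 (k n i : ℕ) (hk : 1 ≤ k) (hn : 1 ≤ n) (hi : i ≤ k) (q : ℝ)
    (hq0 : 0 < q) (hq1 : q ≤ 1 / (Real.exp 1 * k + 1)) :
    (Nat.choose (k * n) (i * n) : ℝ) * q ^ (i * n) * (1 - q) ^ ((k - i) * n)
      ≤ (1 - q) ^ (k * n) := by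
  have hk1 : (1:ℝ) ≤ k := by exact_mod_cast hk
  have he : (1:ℝ) < Real.exp 1 := by
    have := Real.add_one_le_exp (1:ℝ); linarith
  have hek : (0:ℝ) < Real.exp 1 * k + 1 := by nlinarith
  have hq_ek : q * (Real.exp 1 * k + 1) ≤ 1 := by
    rw [div_eq_mul_inv, one_mul] at hq1
    calc q * (Real.exp 1 * k + 1) ≤ (Real.exp 1 * k + 1)⁻¹ * (Real.exp 1 * k + 1) :=
          mul_le_mul_of_nonneg_right hq1 hek.le
      _ = 1 := inv_mul_cancel₀ (ne_of_gt hek)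
  have hq1' : (0:ℝ) < 1 - q := by nlinarith
  -- key: ek * q ≤ 1 - q
  have hkey : Real.exp 1 * k * q ≤ 1 - q := by nlinarith
  rcases Nat.eq_zero_or_pos i with hi0 | hipos
  · subst hi0; simp
  · set m := i * n with hm
    have hmpos : 0 < m := Nat.mul_pos hipos hn
    have hmR : (0:ℝ) < m := by exact_mod_cast hmpos
    -- choose bound
    have hchoose : (Nat.choose (k * n) m : ℝ) ≤ (Real.exp 1 * k) ^ m := by
      have h1 : (Nat.choose (k * n) m : ℝ) ≤ ((k * n : ℕ) : ℝ) ^ m / (Nat.factorial m) :=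
        Nat.choose_le_pow_div m (k * n)
      have h2 : (m : ℝ) ^ m ≤ Real.exp 1 ^ m * (Nat.factorial m) := pow_self_le_exp_pow_factorial m
      have hfac : (0:ℝ) < ((Nat.factorial m) : ℝ) := by exact_mod_cast m.factorial_pos
      have hkn : ((k * n : ℕ) : ℝ) ≤ (k : ℝ) * m := by
        push_cast [hm]
        have h4 : (1:ℝ) ≤ (i:ℝ) := by exact_mod_cast hipos
        have h5 : (0:ℝ) ≤ (n:ℝ) := by positivity
        have h6 : (0:ℝ) ≤ (k:ℝ) := by positivity
        nlinarith [mul_nonneg (mul_nonneg h6 h5) (sub_nonneg.mpr h4)]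
      have h3 : ((k * n : ℕ) : ℝ) ^ m ≤ ((k : ℝ) * m) ^ m :=
        pow_le_pow_left₀ (by positivity) hkn m
      calc (Nat.choose (k * n) m : ℝ)
          ≤ ((k * n : ℕ) : ℝ) ^ m / (Nat.factorial m) := h1
        _ ≤ ((k : ℝ) * m) ^ m / (Nat.factorial m) := by gcongr
        _ = (k : ℝ) ^ m * (m : ℝ) ^ m / (Nat.factorial m) := by rw [mul_pow]
        _ ≤ (k : ℝ) ^ m * (Real.exp 1 ^ m * (Nat.factorial m)) / (Nat.factorial m) := by
            gcongr
        _ = (k : ℝ) ^ m * Real.exp 1 ^ m := by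
            field_simp
        _ = (Real.exp 1 * k) ^ m := by rw [mul_pow]; ring
    -- main
    have hmain : (Nat.choose (k * n) m : ℝ) * q ^ m ≤ (1 - q) ^ m := by
      calc (Nat.choose (k * n) m : ℝ) * q ^ m
          ≤ (Real.exp 1 * k) ^ m * q ^ m :=
            mul_le_mul_of_nonneg_right hchoose (by positivity)
        _ = (Real.exp 1 * k * q) ^ m := by rw [← mul_pow]
        _ ≤ (1 - q) ^ m := pow_le_pow_left₀ (by positivity) hkey m
    have hsplit : (1 - q) ^ (k * n) = (1 - q) ^ m * (1 - q) ^ ((k - i) * n) := by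
      rw [← pow_add]
      congr 1
      rw [hm, ← Nat.add_mul, Nat.add_sub_cancel' hi]
    rw [hsplit]
    exact mul_le_mul_of_nonneg_right hmain (by positivity)
end

section
/- Let n, k, r, N ≥ 1 be natural numbers and let q be a real number with 0 ≤ q ≤ 1. For X : Fin N → (Fin r → Bool) define the weight w(X) = ∏_{j ∈ Fin N} ∏_{i ∈ Fin r} (if X j i then q else 1−q), and let Z(X) be the number of sets S ⊆ Fin N with |S| = k·n such that for every coordinate i ∈ Fin r, n divides |{j ∈ S : X j i = true}|. Then ∑_{X} w(X) · Z(X) = (choose N (k·n)) · (∑_{i=0}^{k} (choose (k·n) (i·n)) · q^(i·n) · (1−q)^((k−i)·n))^r. -/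
open Finset

-- grouping a powerset sum by cardinality
lemma ezs_sum_powerset_card {α : Type*} [DecidableEq α] (q : ℝ) (t : Finset α) (c : ℕ → ℝ) :
    ∑ b ∈ t.powerset, q ^ b.card * (1 - q) ^ (t.card - b.card) * c b.card
      = ∑ m ∈ Finset.range (t.card + 1),
          (Nat.choose t.card m : ℝ) * (q ^ m * (1 - q) ^ (t.card - m) * c m) := by
  rw [Finset.sum_powerset]
  refine Finset.sum_congr rfl fun m hm => ?_
  rw [Finset.sum_congr rfl (fun b hb => ?_), Finset.sum_const, Finset.card_powersetCard,
    nsmul_eq_mul]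
  · rw [(Finset.mem_powersetCard.mp hb).2]

-- total mass is 1
lemma ezs_sum_powerset_one {α : Type*} [DecidableEq α] (q : ℝ) (t : Finset α) :
    ∑ b ∈ t.powerset, q ^ b.card * (1 - q) ^ (t.card - b.card) = 1 := by
  have h := ezs_sum_powerset_card q t (fun _ => 1)
  simp only [mul_one] at h
  rw [h]
  have h2 : ∑ m ∈ Finset.range (t.card + 1),
      (Nat.choose t.card m : ℝ) * (q ^ m * (1 - q) ^ (t.card - m))
      = (q + (1 - q)) ^ t.card := by
    rw [add_pow]
    exact Finset.sum_congr rfl fun m hm => by ring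
  rw [h2]; norm_num

-- splitting powerset of a disjoint union
lemma ezs_sum_powerset_union {α : Type*} [DecidableEq α] (s t : Finset α)
    (hd : Disjoint s t) (f : Finset α → Finset α → ℝ) :
    ∑ U ∈ (s ∪ t).powerset, f (U ∩ s) (U ∩ t)
      = ∑ a ∈ s.powerset, ∑ b ∈ t.powerset, f a b := by
  rw [← Finset.sum_product']
  refine Finset.sum_nbij' (fun U => (U ∩ s, U ∩ t)) (fun p => p.1 ∪ p.2) ?_ ?_ ?_ ?_ ?_
  · intro U hU
    simp [Finset.mem_product]
  · intro p hp
    rw [Finset.mem_product] at hp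
    exact Finset.mem_powerset.mpr (Finset.union_subset_union
      (Finset.mem_powerset.mp hp.1) (Finset.mem_powerset.mp hp.2))
  · intro U hU
    show U ∩ s ∪ U ∩ t = U
    rw [← Finset.inter_union_distrib_left, Finset.inter_eq_left]
    exact Finset.mem_powerset.mp hU
  · intro p hp
    rw [Finset.mem_product] at hp
    have h1 := Finset.mem_powerset.mp hp.1
    have h2 := Finset.mem_powerset.mp hp.2
    have d1 : p.2 ∩ s = ∅ := by
      rw [← Finset.disjoint_iff_inter_eq_empty]
      exact Finset.disjoint_of_subset_left h2 hd.symm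
    have d2 : p.1 ∩ t = ∅ := by
      rw [← Finset.disjoint_iff_inter_eq_empty]
      exact Finset.disjoint_of_subset_left h1 hd
    have e1 : (p.1 ∪ p.2) ∩ s = p.1 := by
      rw [Finset.union_inter_distrib_right, Finset.inter_eq_left.mpr h1, d1,
        Finset.union_empty]
    have e2 : (p.1 ∪ p.2) ∩ t = p.2 := by
      rw [Finset.union_inter_distrib_right, Finset.inter_eq_left.mpr h2, d2,
        Finset.empty_union]
    show ((p.1 ∪ p.2) ∩ s, (p.1 ∪ p.2) ∩ t) = p
    rw [e1, e2]
  · intro U hU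
    rfl

-- reindexing multiples of n
lemma ezs_reindex (n k : ℕ) (hn : 1 ≤ n) (c : ℕ → ℝ) :
    ∑ m ∈ Finset.range (k * n + 1), (if n ∣ m then c m else 0)
      = ∑ i ∈ Finset.range (k + 1), c (i * n) := by
  rw [← Finset.sum_filter]
  refine Finset.sum_nbij' (fun m => m / n) (fun i => i * n) ?_ ?_ ?_ ?_ ?_
  · intro m hm
    simp only [Finset.mem_filter, Finset.mem_range] at hm ⊢
    obtain ⟨hlt, j, rfl⟩ := hm
    rw [Nat.mul_div_cancel_left _ hn]
    have : j ≤ k := by nlinarith [Nat.lt_succ_iff.mp hlt]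
    omega
  · intro i hi
    simp only [Finset.mem_filter, Finset.mem_range] at hi ⊢
    constructor
    · have : i ≤ k := Nat.lt_succ_iff.mp hi
      have : i * n ≤ k * n := Nat.mul_le_mul_right n this
      omega
    · exact dvd_mul_left n i
  · intro m hm
    simp only [Finset.mem_filter] at hm
    exact Nat.div_mul_cancel hm.2
  · intro i hi
    show i * n / n = i
    exact Nat.mul_div_cancel i hn
  · intro m hm
    simp only [Finset.mem_filter] at hm
    rw [Nat.div_mul_cancel hm.2]

lemma ezs_col (n k N : ℕ) (hn : 1 ≤ n) (q : ℝ) (S : Finset (Fin N)) (hS : S.card = k * n) :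
    ∑ y : Fin N → Bool, (∏ j, (if y j then q else 1 - q)) *
        (if n ∣ (S.filter (fun j => y j = true)).card then 1 else 0)
      = ∑ i ∈ Finset.range (k + 1),
          (Nat.choose (k * n) (i * n) : ℝ) * q ^ (i * n) * (1 - q) ^ ((k - i) * n) := by
  classical
  set χ : ℕ → ℝ := fun m => if n ∣ m then 1 else 0 with hχ
  have step1 : ∑ y : Fin N → Bool, (∏ j, (if y j then q else 1 - q)) *
        (if n ∣ (S.filter (fun j => y j = true)).card then 1 else 0)
      = ∑ U ∈ (Finset.univ : Finset (Fin N)).powerset,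
          q ^ U.card * (1 - q) ^ (N - U.card) * χ ((U ∩ S).card) := by
    refine Finset.sum_nbij' (fun y => Finset.univ.filter (fun j => y j = true))
      (fun U => (fun j => decide (j ∈ U))) ?_ ?_ ?_ ?_ ?_
    · intro y _; exact Finset.mem_powerset.mpr (Finset.subset_univ _)
    · intro U _; exact Finset.mem_univ _
    · intro y _
      funext j
      simp
    · intro U _
      ext j
      simp
    · intro y _
      have hfilt : S.filter (fun j => y j = true)
          = (Finset.univ.filter (fun j => y j = true)) ∩ S := by
        ext j; simp [Finset.mem_inter, Finset.mem_filter, and_comm]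
      have hprod : (∏ j, (if y j then q else 1 - q))
          = q ^ (Finset.univ.filter (fun j => y j = true)).card
            * (1 - q) ^ (N - (Finset.univ.filter (fun j => y j = true)).card) := by
        rw [Finset.prod_ite, Finset.prod_const, Finset.prod_const]
        congr 1
        rw [Finset.filter_not, Finset.card_sdiff_of_subset (Finset.filter_subset _ _),
          Finset.card_univ, Fintype.card_fin]
      rw [hfilt, hprod, hχ]
  rw [step1]
  have hcompl : (Finset.univ : Finset (Fin N)).powerset = (S ∪ Sᶜ).powerset := by
    rw [Finset.union_compl]
  have hNcard : N = S.card + Sᶜ.card := by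
    have := Finset.card_add_card_compl S
    simp only [Fintype.card_fin] at this
    omega
  have step2 : ∑ U ∈ (Finset.univ : Finset (Fin N)).powerset,
        q ^ U.card * (1 - q) ^ (N - U.card) * χ ((U ∩ S).card)
      = ∑ a ∈ S.powerset, ∑ b ∈ Sᶜ.powerset,
          (q ^ a.card * (1 - q) ^ (S.card - a.card) * χ a.card)
            * (q ^ b.card * (1 - q) ^ (Sᶜ.card - b.card)) := by
    rw [hcompl, ← ezs_sum_powerset_union S Sᶜ disjoint_compl_right]
    refine Finset.sum_congr rfl fun U hU => ?_
    have hUsub : U ⊆ S ∪ Sᶜ := Finset.mem_powerset.mp hU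
    have hUcard : U.card = (U ∩ S).card + (U ∩ Sᶜ).card := by
      rw [← Finset.card_union_of_disjoint, ← Finset.inter_union_distrib_left,
        Finset.inter_eq_left.mpr hUsub]
      exact Finset.disjoint_of_subset_left Finset.inter_subset_right
        (Finset.disjoint_of_subset_right Finset.inter_subset_right
          disjoint_compl_right)
    have h1 : (U ∩ S).card ≤ S.card := Finset.card_le_card Finset.inter_subset_right
    have h2 : (U ∩ Sᶜ).card ≤ Sᶜ.card := Finset.card_le_card Finset.inter_subset_right
    have hexp : N - ((U ∩ S).card + (U ∩ Sᶜ).card)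
        = (S.card - (U ∩ S).card) + (Sᶜ.card - (U ∩ Sᶜ).card) := by
      omega
    rw [hUcard, hexp, pow_add, pow_add]
    ring
  rw [step2]
  have step3 : ∀ a ∈ S.powerset, ∑ b ∈ Sᶜ.powerset,
        (q ^ a.card * (1 - q) ^ (S.card - a.card) * χ a.card)
          * (q ^ b.card * (1 - q) ^ (Sᶜ.card - b.card))
      = q ^ a.card * (1 - q) ^ (S.card - a.card) * χ a.card := by
    intro a _
    rw [← Finset.mul_sum, ezs_sum_powerset_one, mul_one]
  rw [Finset.sum_congr rfl step3, ezs_sum_powerset_card q S χ, hS]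
  have step4 : ∀ m ∈ Finset.range (k * n + 1),
      (Nat.choose (k * n) m : ℝ) * (q ^ m * (1 - q) ^ (k * n - m) * χ m)
        = (if n ∣ m then (Nat.choose (k * n) m : ℝ) * q ^ m * (1 - q) ^ (k * n - m) else 0) := by
    intro m _
    rw [hχ]
    by_cases h : n ∣ m <;> simp [h] <;> ring
  rw [Finset.sum_congr rfl step4, ezs_reindex n k hn]
  refine Finset.sum_congr rfl fun i hi => ?_
  congr 1
  rw [Nat.sub_mul, mul_comm i n, mul_comm k n]

theorem expected_zero_sum_count (n k r N : ℕ) (hn : 1 ≤ n) (hk : 1 ≤ k) (hr : 1 ≤ r)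
    (hN : 1 ≤ N) (q : ℝ) (hq0 : 0 ≤ q) (hq1 : q ≤ 1) :
    ∑ X : Fin N → Fin r → Bool,
        (∏ j, ∏ i, (if X j i then q else 1 - q)) *
          ((Finset.univ.filter (fun S : Finset (Fin N) =>
              S.card = k * n ∧
              ∀ i : Fin r, n ∣ (S.filter (fun j => X j i = true)).card)).card : ℝ)
      = (Nat.choose N (k * n) : ℝ) *
          (∑ i ∈ Finset.range (k + 1),
            (Nat.choose (k * n) (i * n) : ℝ) * q ^ (i * n) * (1 - q) ^ ((k - i) * n)) ^ r := by
  classical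
  have hcard : ∀ X : Fin N → Fin r → Bool,
      ((Finset.univ.filter (fun S : Finset (Fin N) =>
          S.card = k * n ∧ ∀ i : Fin r, n ∣ (S.filter (fun j => X j i = true)).card)).card : ℝ)
      = ∑ S ∈ Finset.powersetCard (k * n) (Finset.univ : Finset (Fin N)),
          (if ∀ i : Fin r, n ∣ (S.filter (fun j => X j i = true)).card then (1:ℝ) else 0) := by
    intro X
    rw [Finset.sum_boole]
    congr 1
    rw [Finset.powersetCard_eq_filter, Finset.powerset_univ, Finset.filter_filter]
  simp only [hcard, Finset.mul_sum]
  rw [Finset.sum_comm]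
  have hinner : ∀ S ∈ Finset.powersetCard (k * n) (Finset.univ : Finset (Fin N)),
      ∑ X : Fin N → Fin r → Bool,
        (∏ j, ∏ i, (if X j i then q else 1 - q)) *
          (if ∀ i : Fin r, n ∣ (S.filter (fun j => X j i = true)).card then (1:ℝ) else 0)
      = (∑ i ∈ Finset.range (k + 1),
            (Nat.choose (k * n) (i * n) : ℝ) * q ^ (i * n) * (1 - q) ^ ((k - i) * n)) ^ r := by
    intro S hS
    have hScard : S.card = k * n := (Finset.mem_powersetCard.mp hS).2
    have hsum1 : ∀ X : Fin N → Fin r → Bool,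
        (∏ j, ∏ i, (if X j i then q else 1 - q)) *
          (if ∀ i : Fin r, n ∣ (S.filter (fun j => X j i = true)).card then (1:ℝ) else 0)
        = ∏ i : Fin r, ((∏ j, (if X j i then q else 1 - q)) *
            (if n ∣ (S.filter (fun j => X j i = true)).card then (1:ℝ) else 0)) := by
      intro X
      rw [Finset.prod_mul_distrib, Finset.prod_comm]
      congr 1
      rw [Finset.prod_boole]
      simp
    simp only [hsum1]
    have hswap : (∑ X : Fin N → Fin r → Bool, ∏ i : Fin r,
          ((∏ j, (if X j i then q else 1 - q)) *
            (if n ∣ (S.filter (fun j => X j i = true)).card then (1:ℝ) else 0)))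
        = ∑ Y : Fin r → Fin N → Bool, ∏ i : Fin r,
          ((∏ j, (if Y i j then q else 1 - q)) *
            (if n ∣ (S.filter (fun j => Y i j = true)).card then (1:ℝ) else 0)) :=
      Fintype.sum_equiv (Equiv.piComm fun (_ : Fin N) (_ : Fin r) => Bool) _ _ (fun X => rfl)
    rw [hswap]
    rw [← Fintype.piFinset_univ]
    have hps := Finset.prod_univ_sum (fun _ : Fin r => (Finset.univ : Finset (Fin N → Bool)))
      (fun _ y => (∏ j, (if y j then q else 1 - q)) *
        (if n ∣ (S.filter (fun j => y j = true)).card then (1:ℝ) else 0))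
    rw [← hps]
    rw [Finset.prod_congr rfl (fun i _ => ezs_col n k N hn q S hScard)]
    rw [Finset.prod_const, Finset.card_univ, Fintype.card_fin]
  rw [Finset.sum_congr rfl hinner, Finset.sum_const, nsmul_eq_mul,
    Finset.card_powersetCard, Finset.card_univ, Fintype.card_fin]
end

section
/- Let n, k, r, N ≥ 1 be natural numbers and suppose there exists a real number q with 0 ≤ q ≤ 1 such that (choose N (k·n)) · (∑_{i=0}^{k} (choose (k·n) (i·n)) · q^(i·n) · (1−q)^((k−i)·n))^r < 1. Then there exists a sequence X : Fin N → (Fin r → ZMod n), with every coordinate of every term equal to 0 or 1 in ZMod n, containing no zero-sum subsequence of length k·n. -/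
open Finset

lemma sum_pi_prod {ι κ : Type*} [Fintype ι] [DecidableEq ι] [Fintype κ]
    (F : ι → κ → ℝ) : ∑ f : ι → κ, ∏ j, F j (f j) = ∏ j, ∑ b, F j b := by
  rw [Finset.prod_univ_sum, Fintype.piFinset_univ]

lemma sum_wt_prod {ι : Type*} [Fintype ι] [DecidableEq ι] (q : ℝ) :
    ∑ f : ι → Bool, ∏ j, (if f j then q else 1 - q) = 1 := by
  rw [sum_pi_prod (fun _ b => if b = true then q else 1 - q)]
  simp

lemma coord_sum (n k : ℕ) (hn : 1 ≤ n) (q : ℝ) {α : Type*} [Fintype α] [DecidableEq α]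
    (hcard : Fintype.card α = k * n) :
    ∑ f : α → Bool,
      (if (∑ j, (if f j then (1 : ZMod n) else 0)) = 0 then
        ∏ j, (if f j then q else 1 - q) else 0) =
    ∑ i ∈ range (k + 1),
      (Nat.choose (k * n) (i * n) : ℝ) * q ^ (i * n) * (1 - q) ^ ((k - i) * n) := by
  haveI : NeZero n := ⟨by omega⟩
  have step1 : ∑ f : α → Bool,
      (if (∑ j, (if f j then (1 : ZMod n) else 0)) = 0 then
        ∏ j, (if f j then q else 1 - q) else 0) =
      ∑ T ∈ (univ : Finset α).powerset,
        (if ((#T : ZMod n) = 0) then q ^ #T * (1 - q) ^ (k * n - #T) else 0) := by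
    refine Finset.sum_nbij' (fun f => univ.filter (fun a => f a))
      (fun T a => a ∈ T) ?_ ?_ ?_ ?_ ?_
    · intro f _; simp
    · intro T _; simp
    · intro f _
      funext a; simp
    · intro T _
      ext a; simp [Finset.mem_filter]
    · intro f _
      have hsum : (∑ j, (if f j then (1 : ZMod n) else 0)) =
          ((univ.filter (fun a => f a)).card : ZMod n) := by
        simp [Finset.sum_boole]
      rw [hsum]
      congr 1
      rw [Finset.prod_ite (fun _ => q) (fun _ => 1 - q), Finset.prod_const,
        Finset.prod_const]
      congr 2
      have := Finset.card_filter_add_card_filter_not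
        (s := (univ : Finset α)) (p := fun a => f a = true)
      simp only [Finset.card_univ, hcard] at this
      simp only [← this]
      omega
  rw [step1]
  rw [Finset.sum_powerset_apply_card
    (f := fun m => if ((m : ZMod n) = 0) then q ^ m * (1 - q) ^ (k * n - m) else 0)]
  simp only [Finset.card_univ, hcard]
  calc ∑ m ∈ range (k * n + 1),
        ((k * n).choose m) • (if ((m : ZMod n) = 0) then q ^ m * (1 - q) ^ (k * n - m) else 0)
      = ∑ m ∈ range (k * n + 1),
        (if n ∣ m then ((k * n).choose m : ℝ) * q ^ m * (1 - q) ^ (k * n - m) else 0) := by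
        refine Finset.sum_congr rfl fun m _ => ?_
        by_cases hd : n ∣ m
        · rw [if_pos ((ZMod.natCast_eq_zero_iff m n).2 hd), if_pos hd,
            nsmul_eq_mul, mul_assoc]
        · rw [if_neg (fun hc => hd ((ZMod.natCast_eq_zero_iff m n).1 hc)),
            if_neg hd, smul_zero]
    _ = ∑ m ∈ (range (k * n + 1)).filter (fun m => n ∣ m),
        ((k * n).choose m : ℝ) * q ^ m * (1 - q) ^ (k * n - m) := (Finset.sum_filter _ _).symm
    _ = ∑ i ∈ range (k + 1),
        (Nat.choose (k * n) (i * n) : ℝ) * q ^ (i * n) * (1 - q) ^ ((k - i) * n) := by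
        refine Finset.sum_nbij' (fun m => m / n) (fun i => i * n) ?_ ?_ ?_ ?_ ?_
        · intro m hm
          simp only [Finset.mem_filter, Finset.mem_range] at hm
          simp only [Finset.mem_range]
          obtain ⟨hm1, c, rfl⟩ := hm
          rw [Nat.mul_div_cancel_left _ (by omega)]
          have : c ≤ k := by nlinarith
          omega
        · intro i hi
          simp only [Finset.mem_range] at hi
          simp only [Finset.mem_filter, Finset.mem_range]
          constructor
          · have : i * n ≤ k * n := Nat.mul_le_mul_right _ (by omega)
            omega
          · exact Dvd.intro i (mul_comm n i)
        · intro m hm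
          simp only [Finset.mem_filter] at hm
          exact Nat.div_mul_cancel hm.2
        · intro i _
          exact Nat.mul_div_cancel _ (by omega)
        · intro m hm
          simp only [Finset.mem_filter, Finset.mem_range] at hm
          obtain ⟨hm1, c, rfl⟩ := hm
          have hck : c ≤ k := by nlinarith
          simp only [Nat.mul_div_cancel_left _ (show 0 < n by omega), mul_comm n c,
            Nat.sub_mul, Nat.mul_div_cancel _ (show 0 < n by omega)]

lemma single_coord (n k N : ℕ) (hn : 1 ≤ n) (q : ℝ) (S : Finset (Fin N)) (hS : #S = k * n) :
    ∑ g : Fin N → Bool,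
      (if (∑ j ∈ S, (if g j then (1 : ZMod n) else 0)) = 0 then
        ∏ j, (if g j then q else 1 - q) else 0) =
    ∑ i ∈ range (k + 1),
      (Nat.choose (k * n) (i * n) : ℝ) * q ^ (i * n) * (1 - q) ^ ((k - i) * n) := by
  classical
  have key : ∑ g : Fin N → Bool,
      (if (∑ j ∈ S, (if g j then (1 : ZMod n) else 0)) = 0 then
        ∏ j, (if g j then q else 1 - q) else 0) =
      ∑ p : ({x // x ∈ S} → Bool) × ({x // x ∈ Sᶜ} → Bool),
        (if (∑ j, (if p.1 j then (1 : ZMod n) else 0)) = 0 then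
          ∏ j, (if p.1 j then q else 1 - q) else 0) *
        (∏ j, (if p.2 j then q else 1 - q)) := by
    refine (Finset.sum_nbij'
      (fun g => (fun j => g j.1, fun j => g j.1))
      (fun p j => if h : j ∈ S then p.1 ⟨j, h⟩ else p.2 ⟨j, Finset.mem_compl.2 h⟩)
      (fun _ _ => Finset.mem_univ _) (fun _ _ => Finset.mem_univ _) ?_ ?_ ?_)
    · intro g _
      funext j
      by_cases h : j ∈ S <;> simp [h]
    · intro p _
      refine Prod.ext ?_ ?_
      · funext j; simp [j.2]
      · funext j
        have : ¬ (j.1 ∈ S) := Finset.mem_compl.1 j.2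
        simp [this]
    · intro g _
      have hsum : (∑ j ∈ S, (if g j then (1 : ZMod n) else 0)) =
          ∑ j : {x // x ∈ S}, (if g j.1 then (1 : ZMod n) else 0) := by
        rw [Finset.univ_eq_attach, Finset.sum_attach S
          (fun j => if g j then (1 : ZMod n) else 0)]
      have hprod : (∏ j, (if g j then q else 1 - q)) =
          (∏ j : {x // x ∈ S}, (if g j.1 then q else 1 - q)) *
          (∏ j : {x // x ∈ Sᶜ}, (if g j.1 then q else 1 - q)) := by
        rw [← Finset.prod_mul_prod_compl S (fun j => if g j then q else 1 - q),
          Finset.univ_eq_attach, Finset.univ_eq_attach,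
          Finset.prod_attach S (fun j => if g j then q else 1 - q),
          Finset.prod_attach Sᶜ (fun j => if g j then q else 1 - q)]
      rw [hsum, hprod]
      by_cases hc : (∑ j : {x // x ∈ S}, (if g j.1 then (1 : ZMod n) else 0)) = 0 <;>
        simp [hc]
  rw [key, Fintype.sum_prod_type]
  simp only
  have : ∀ u : {x // x ∈ S} → Bool,
      ∑ v : {x // x ∈ Sᶜ} → Bool,
        (if (∑ j : {x // x ∈ S}, (if u j then (1 : ZMod n) else 0)) = 0 then
          ∏ j : {x // x ∈ S}, (if u j then q else 1 - q) else 0) *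
        (∏ j : {x // x ∈ Sᶜ}, (if v j then q else 1 - q)) =
      (if (∑ j : {x // x ∈ S}, (if u j then (1 : ZMod n) else 0)) = 0 then
          ∏ j : {x // x ∈ S}, (if u j then q else 1 - q) else 0) * 1 := by
    intro u
    rw [← Finset.mul_sum, sum_wt_prod]
  rw [Finset.sum_congr rfl fun u _ => this u, ← Finset.sum_mul, mul_one]
  rw [coord_sum n k hn q (by rw [Fintype.card_coe, hS])]

lemma bad_weight (n k r N : ℕ) (hn : 1 ≤ n) (q : ℝ) (S : Finset (Fin N)) (hS : #S = k * n) :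
    ∑ f : Fin N → Fin r → Bool,
      (if (∑ j ∈ S, (fun i => if f j i then (1 : ZMod n) else 0)) = (0 : Fin r → ZMod n) then
        ∏ j, ∏ i, (if f j i then q else 1 - q) else 0) =
    (∑ i ∈ range (k + 1),
      (Nat.choose (k * n) (i * n) : ℝ) * q ^ (i * n) * (1 - q) ^ ((k - i) * n)) ^ r := by
  classical
  have hterm : ∀ f : Fin N → Fin r → Bool,
      (if (∑ j ∈ S, (fun i => if f j i then (1 : ZMod n) else 0)) = (0 : Fin r → ZMod n) then
        ∏ j, ∏ i, (if f j i then q else 1 - q) else 0) =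
      ∏ i : Fin r, (if (∑ j ∈ S, (if f j i then (1 : ZMod n) else 0)) = 0 then
        ∏ j, (if f j i then q else 1 - q) else 0) := by
    intro f
    by_cases hc : (∑ j ∈ S, (fun i => if f j i then (1 : ZMod n) else 0)) = (0 : Fin r → ZMod n)
    · have hall : ∀ i, (∑ j ∈ S, (if f j i then (1 : ZMod n) else 0)) = 0 := by
        intro i
        have := congrFun hc i
        simpa [Finset.sum_apply] using this
      rw [if_pos hc, Finset.prod_comm]
      exact (Finset.prod_congr rfl fun i _ => if_pos (hall i)).symm
    · have : ∃ i, ¬ (∑ j ∈ S, (if f j i then (1 : ZMod n) else 0)) = 0 := by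
        by_contra hall
        push_neg at hall
        exact hc (funext fun i => by simpa [Finset.sum_apply] using hall i)
      obtain ⟨i, hi⟩ := this
      rw [if_neg hc]
      symm
      apply Finset.prod_eq_zero (Finset.mem_univ i)
      rw [if_neg hi]
  rw [Finset.sum_congr rfl fun f _ => hterm f]
  have hswap : ∑ f : Fin N → Fin r → Bool,
      ∏ i : Fin r, (if (∑ j ∈ S, (if f j i then (1 : ZMod n) else 0)) = 0 then
        ∏ j, (if f j i then q else 1 - q) else 0) =
      ∑ g : Fin r → Fin N → Bool,
      ∏ i : Fin r, (if (∑ j ∈ S, (if g i j then (1 : ZMod n) else 0)) = 0 then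
        ∏ j, (if g i j then q else 1 - q) else 0) := by
    exact Finset.sum_nbij' (fun f i j => f j i) (fun g j i => g i j)
      (fun _ _ => Finset.mem_univ _) (fun _ _ => Finset.mem_univ _)
      (fun _ _ => rfl) (fun _ _ => rfl) (fun _ _ => rfl)
  rw [hswap]
  refine (sum_pi_prod (fun (_ : Fin r) (g : Fin N → Bool) =>
    if (∑ j ∈ S, (if g j then (1 : ZMod n) else 0)) = 0 then
        ∏ j, (if g j then q else 1 - q) else 0)).trans ?_
  rw [Finset.prod_congr rfl fun i (_ : i ∈ (Finset.univ : Finset (Fin r))) =>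
    single_coord n k N hn q S hS]
  rw [Finset.prod_const, Finset.card_univ, Fintype.card_fin]

theorem first_moment_existence (n k r N : ℕ) (hn : 1 ≤ n) (hk : 1 ≤ k) (hr : 1 ≤ r)
    (hN : 1 ≤ N)
    (h : ∃ q : ℝ, 0 ≤ q ∧ q ≤ 1 ∧
        (Nat.choose N (k * n) : ℝ) *
          (∑ i ∈ Finset.range (k + 1),
            (Nat.choose (k * n) (i * n) : ℝ) * q ^ (i * n) * (1 - q) ^ ((k - i) * n)) ^ r < 1) :
    ∃ X : Fin N → Fin r → ZMod n,
      (∀ j i, X j i = 0 ∨ X j i = 1) ∧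
      ∀ S : Finset (Fin N), S.card = k * n → ∑ j ∈ S, X j ≠ 0 := by
  classical
  obtain ⟨q, hq0, hq1, hlt⟩ := h
  by_contra hcon
  push_neg at hcon
  set P : ℝ := ∑ i ∈ Finset.range (k + 1),
      (Nat.choose (k * n) (i * n) : ℝ) * q ^ (i * n) * (1 - q) ^ ((k - i) * n) with hP
  have hwt : ∀ b : Bool, 0 ≤ (if b then q else 1 - q) := by
    intro b; cases b
    · simpa using by linarith
    · simpa using hq0
  have hW : ∀ f : Fin N → Fin r → Bool,
      0 ≤ ∏ j, ∏ i, (if f j i then q else 1 - q) := by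
    intro f
    exact Finset.prod_nonneg fun j _ => Finset.prod_nonneg fun i _ => hwt _
  have htot : ∑ f : Fin N → Fin r → Bool,
      ∏ j, ∏ i, (if f j i then q else 1 - q) = 1 := by
    refine (sum_pi_prod (fun (_ : Fin N) (g : Fin r → Bool) =>
      ∏ i, if g i then q else 1 - q)).trans ?_
    rw [Finset.prod_congr rfl fun j (_ : j ∈ (Finset.univ : Finset (Fin N))) =>
      sum_wt_prod (ι := Fin r) q]
    simp
  have hbound : ∀ f : Fin N → Fin r → Bool,
      (∏ j, ∏ i, (if f j i then q else 1 - q)) ≤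
      ∑ S ∈ Finset.powersetCard (k * n) (Finset.univ : Finset (Fin N)),
        (if (∑ j ∈ S, (fun i => if f j i then (1 : ZMod n) else 0)) = (0 : Fin r → ZMod n) then
          ∏ j, ∏ i, (if f j i then q else 1 - q) else 0) := by
    intro f
    obtain ⟨S, hScard, hSsum⟩ := hcon (fun j i => if f j i then 1 else 0)
      (fun j i => by by_cases hb : f j i <;> simp [hb])
    have hSmem : S ∈ Finset.powersetCard (k * n) (Finset.univ : Finset (Fin N)) := by
      rw [Finset.mem_powersetCard]
      exact ⟨Finset.subset_univ S, hScard⟩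
    have heq : (if (∑ j ∈ S, (fun i => if f j i then (1 : ZMod n) else 0)) =
        (0 : Fin r → ZMod n) then ∏ j, ∏ i, (if f j i then q else 1 - q) else 0) =
        ∏ j, ∏ i, (if f j i then q else 1 - q) := if_pos hSsum
    refine le_trans (le_of_eq heq.symm) ?_
    refine Finset.single_le_sum (f := fun T => if (∑ j ∈ T, (fun i => if f j i then (1 : ZMod n) else 0)) = (0 : Fin r → ZMod n) then ∏ j, ∏ i, (if f j i then q else 1 - q) else 0) (fun T _ => ?_) hSmem
    split
    · exact hW f
    · exact le_refl 0
  have h1 : (1 : ℝ) ≤ (Nat.choose N (k * n) : ℝ) * P ^ r := by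
    calc (1 : ℝ) = ∑ f : Fin N → Fin r → Bool,
          ∏ j, ∏ i, (if f j i then q else 1 - q) := htot.symm
      _ ≤ ∑ f : Fin N → Fin r → Bool,
          ∑ S ∈ Finset.powersetCard (k * n) (Finset.univ : Finset (Fin N)),
            (if (∑ j ∈ S, (fun i => if f j i then (1 : ZMod n) else 0)) =
              (0 : Fin r → ZMod n) then ∏ j, ∏ i, (if f j i then q else 1 - q) else 0) :=
          Finset.sum_le_sum fun f _ => hbound f
      _ = ∑ S ∈ Finset.powersetCard (k * n) (Finset.univ : Finset (Fin N)),
          ∑ f : Fin N → Fin r → Bool,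
            (if (∑ j ∈ S, (fun i => if f j i then (1 : ZMod n) else 0)) =
              (0 : Fin r → ZMod n) then ∏ j, ∏ i, (if f j i then q else 1 - q) else 0) :=
          Finset.sum_comm
      _ = ∑ S ∈ Finset.powersetCard (k * n) (Finset.univ : Finset (Fin N)), P ^ r := by
          refine Finset.sum_congr rfl fun S hS => ?_
          rw [Finset.mem_powersetCard] at hS
          exact bad_weight n k r N hn q S hS.2
      _ = (Nat.choose N (k * n) : ℝ) * P ^ r := by
          rw [Finset.sum_const, Finset.card_powersetCard, Finset.card_univ,
            Fintype.card_fin, nsmul_eq_mul]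
  linarith
end

section
/- Let k ≥ 1 and n ≥ 1 be integers and let q be a real number with 0 < q < 1 satisfying (1−q)^n = (choose (k·n) n) · q^n. Then 1/(e·k + 1) ≤ q ≤ 1/(k + 1). -/
open scoped Nat
lemma choose_lower (k n : ℕ) (hk : 1 ≤ k) : k ^ n ≤ Nat.choose (k * n) n := by
  have h : k ^ n * n ! ≤ (k * n).descFactorial n := by
    rw [Nat.descFactorial_eq_prod_range]
    have : k ^ n * n ! = ∏ i ∈ Finset.range n, k * (n - i) := by
      rw [Finset.prod_mul_distrib, Finset.prod_const, Finset.card_range,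
        ← Nat.descFactorial_eq_prod_range, Nat.descFactorial_self]
    rw [this]
    apply Finset.prod_le_prod'
    intro i hi
    have hin : i < n := Finset.mem_range.mp hi
    have h1 : k * (n - i) + i ≤ k * n := by
      calc k * (n - i) + i ≤ k * (n - i) + k * i := by
            exact Nat.add_le_add_left (Nat.le_mul_of_pos_left i hk) _
        _ = k * ((n - i) + i) := by ring
        _ = k * n := by rw [Nat.sub_add_cancel hin.le]
    omega
  rw [Nat.descFactorial_eq_factorial_mul_choose, mul_comm (n !)] at h
  exact Nat.le_of_mul_le_mul_right h n.factorial_pos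

lemma choose_upper (k n : ℕ) : (Nat.choose (k * n) n : ℝ) ≤ (Real.exp 1 * k) ^ n := by
  have h1 : (Nat.choose (k * n) n : ℝ) ≤ ((k * n : ℕ) : ℝ) ^ n / n ! :=
    Nat.choose_le_pow_div n (k * n)
  have h2 : (n : ℝ) ^ n / n ! ≤ Real.exp n := by
    have := Real.sum_le_exp_of_nonneg (n.cast_nonneg) (n + 1)
    refine le_trans ?_ this
    refine Finset.single_le_sum (f := fun i => (n : ℝ) ^ i / i !) ?_ (Finset.self_mem_range_succ n)
    intro i _
    positivity
  have h3 : Real.exp (n : ℝ) = Real.exp 1 ^ n := by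
    rw [← Real.exp_nat_mul, mul_one]
  have hfpos : (0 : ℝ) < n ! := by positivity
  calc (Nat.choose (k * n) n : ℝ) ≤ ((k * n : ℕ) : ℝ) ^ n / n ! := h1
    _ = (k : ℝ) ^ n * ((n : ℝ) ^ n / n !) := by
        push_cast; rw [mul_pow]; ring
    _ ≤ (k : ℝ) ^ n * Real.exp 1 ^ n := by
        apply mul_le_mul_of_nonneg_left _ (by positivity)
        rw [← h3]; exact h2
    _ = (Real.exp 1 * k) ^ n := by rw [mul_pow]; ring

theorem balancing_q_range (k n : ℕ) (hk : 1 ≤ k) (hn : 1 ≤ n) (q : ℝ)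
    (hq0 : 0 < q) (hq1 : q < 1)
    (hbal : (1 - q) ^ n = (Nat.choose (k * n) n : ℝ) * q ^ n) :
    1 / (Real.exp 1 * k + 1) ≤ q ∧ q ≤ 1 / (k + 1) := by
  have hn0 : n ≠ 0 := by omega
  have hq1' : (0:ℝ) ≤ 1 - q := by linarith
  have hek : (0:ℝ) < Real.exp 1 * k := by
    have := Real.exp_pos 1
    have : (0:ℝ) < k := by exact_mod_cast hk
    positivity
  constructor
  · -- lower bound : (1-q)^n ≤ (e k q)^n
    have hub : (1 - q) ^ n ≤ (Real.exp 1 * k * q) ^ n := by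
      rw [hbal, mul_pow]
      apply mul_le_mul_of_nonneg_right (choose_upper k n) (by positivity)
    have h : 1 - q ≤ Real.exp 1 * k * q :=
      (pow_le_pow_iff_left₀ hq1' (by positivity) hn0).mp hub
    rw [div_le_iff₀ (by positivity)]
    nlinarith
  · -- upper bound : (k q)^n ≤ (1-q)^n
    have hlb : ((k : ℝ) * q) ^ n ≤ (1 - q) ^ n := by
      rw [hbal, mul_pow]
      apply mul_le_mul_of_nonneg_right _ (by positivity)
      exact_mod_cast choose_lower k n hk
    have hk0 : (0:ℝ) < k := by exact_mod_cast hk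
    have h : (k : ℝ) * q ≤ 1 - q :=
      (pow_le_pow_iff_left₀ (by positivity) hq1' hn0).mp hlb
    rw [le_div_iff₀ (by positivity)]
    nlinarith
end
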